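/- arXiv:1801.07149 — 3 statements merged into one kernel-verified Lean document; each statement's English description precedes it below -/
import Mathlib

section
/- For every definable S ⊆ M, the set S^{no} = {x ∈ M : there exists ε > 0 in M such that (x−ε, x+ε) ∩ S is a near-interval} is definable; consequently the near-interior S ∩ S^{no} and the near-frontier S ∖ S^{no} are definable. -/
/-!
Linear quantifier elimination: every definable set is a finite union of finite intersections of
conditions `ℓ(v) < 0`, `0 < ℓ(v)`, `ℓ(v) = 0`, `ℓ(v) ∈ Q`, `ℓ(v) ∉ Q` with `ℓ` affine. A variable
is eliminated Fourier–Motzkin style; the coset conditions are handled by the density of every coset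
of `Q`, and of the complement of finitely many cosets. Hence a definable `S ⊆ M` agrees, on every
open interval avoiding a certain finite set, with one of finitely many sets `π⁻¹ T`, where
`π : M → M ⧸ Q` and `T` is finite or cofinite. As `Q` is dense, such a set is determined by its
trace on any interval, so the sets of cosets witnessing that `S` is a near-interval around a point
are among these finitely many; for each fixed one, the condition is first order.
-/

open FirstOrder Language Set

/-- Functions of the language of ordered `F`-vector spaces with a predicate:
`+`, `-`, `0`, `1`, and scalar multiplication by each element of `F`. -/
inductive LPFunc (F : Type) : ℕ → Type
  | add : LPFunc F 2
  | neg : LPFunc F 1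
  | zero : LPFunc F 0
  | one : LPFunc F 0
  | smul : F → LPFunc F 1

/-- Relations: the order `<` and the unary predicate `Q`. -/
inductive LPRel : ℕ → Type
  | lt : LPRel 2
  | q : LPRel 1

/-- The language `L_P`. -/
def LP (F : Type) : Language := ⟨LPFunc F, LPRel⟩

variable (F M : Type) [Field F] [LinearOrder F] [IsStrictOrderedRing F]
  [AddCommGroup M] [LinearOrder M] [IsOrderedAddMonoid M] [Module F M]

/-- The natural `L_P`-structure on an ordered `F`-vector space `M` with
distinguished element `one` and predicate `Q`. -/
def LPStruc (one : M) (Q : Set M) : (LP F).Structure M where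
  funMap := fun {n} f x =>
    match n, f with
    | _, LPFunc.add => x 0 + x 1
    | _, LPFunc.neg => -(x 0)
    | _, LPFunc.zero => 0
    | _, LPFunc.one => one
    | _, LPFunc.smul c => c • x 0
  RelMap := fun {n} r x =>
    match n, r with
    | _, LPRel.lt => x 0 < x 1
    | _, LPRel.q => x 0 ∈ Q

/-- A subset of `N^n` is definable (with parameters from `N`). -/
def DefinableIn (L : Language) (N : Type) [L.Structure N] {n : ℕ} (S : Set (Fin n → N)) : Prop :=
  Set.Definable (Set.univ : Set N) L S

/-- A subset of `N` is definable (with parameters from `N`). -/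
def Definable1In (L : Language) (N : Type) [L.Structure N] (S : Set N) : Prop :=
  DefinableIn L N {x : Fin 1 → N | x 0 ∈ S}

/-- A function `N^n → N` is definable if its graph is definable. -/
def DefinableFunIn (L : Language) (N : Type) [L.Structure N] {n : ℕ}
    (f : (Fin n → N) → N) : Prop :=
  DefinableIn L N {x : Fin (n + 1) → N | x (Fin.last n) = f (fun i => x (Fin.castSucc i))}

/-- `S ⊆ N` is `P`-small: covered by the image of `Pⁿ` under a definable function. -/
def SmallIn (L : Language) (N : Type) [L.Structure N] (P : Set N) (S : Set N) : Prop :=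
  ∃ (n : ℕ) (f : (Fin n → N) → N), DefinableFunIn L N f ∧
    S ⊆ f '' {x : Fin n → N | ∀ i, x i ∈ P}

/-- Definability in the pair of ordered vector spaces. -/
def POVSDefinable (one : M) (Q : Set M) {n : ℕ} (S : Set (Fin n → M)) : Prop :=
  letI := LPStruc F M one Q
  DefinableIn (LP F) M S

/-- Definability of a unary set in the pair of ordered vector spaces. -/
def POVSDefinable1 (one : M) (Q : Set M) (S : Set M) : Prop :=
  letI := LPStruc F M one Q
  Definable1In (LP F) M S

/-- Smallness in the pair of ordered vector spaces. -/
def POVSSmall (one : M) (Q : Set M) (S : Set M) : Prop :=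
  letI := LPStruc F M one Q
  SmallIn (LP F) M Q S

/-- The embedding of `M` into `M ∪ {-∞, +∞}`. -/
def toExt (x : M) : WithBot (WithTop M) := ((x : WithTop M) : WithBot (WithTop M))

/-- The open interval `(a,b)` with endpoints from `M ∪ {-∞, +∞}`, as a subset of `M`. -/
def extIoo (a b : WithBot (WithTop M)) : Set M := {x : M | a < toExt M x ∧ toExt M x < b}

/-- The union of the cosets `c + Q` for `c ∈ C`. -/
def cosetUnion (Q : Set M) (C : Finset M) : Set M := ⋃ c ∈ C, {x : M | x - c ∈ Q}

/-- A near-interval: a nonempty set of the form `(a,b) ∩ C` or `(a,b) \ C`, where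
`a < b` in `M ∪ {-∞,+∞}` and `C` is a finite union of cosets of `Q`. -/
def NearInterval (Q : Set M) (S : Set M) : Prop :=
  S.Nonempty ∧ ∃ (a b : WithBot (WithTop M)) (C : Finset M), a < b ∧
    (S = extIoo M a b ∩ cosetUnion M Q C ∨ S = extIoo M a b \ cosetUnion M Q C)
/-- The set `S^{no}` of points around which `S` looks like a near-interval. -/
def nearOpenPart (Q S : Set M) : Set M :=
  {x : M | ∃ ε : M, 0 < ε ∧ NearInterval M Q (Set.Ioo (x - ε) (x + ε) ∩ S)}

namespace POVS

theorem exists_between_of_finite {α : Type*} [LinearOrder α] [NoMaxOrder α] [NoMinOrder α]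
    [Nonempty α] {P : α → Prop} (hP : ∀ a b, a < b → ∃ y ∈ Ioo a b, P y) {L U : Set α}
    (hL : L.Finite) (hU : U.Finite) (hLU : ∀ l ∈ L, ∀ u ∈ U, l < u) :
    ∃ y, P y ∧ (∀ l ∈ L, l < y) ∧ ∀ u ∈ U, y < u := by
  obtain ⟨a, b, hab, hLa, hbU⟩ : ∃ a b, a < b ∧ (∀ l ∈ L, l ≤ a) ∧ ∀ u ∈ U, b ≤ u := by
    rcases U.eq_empty_or_nonempty with rfl | hUne
    · obtain ⟨a, ha⟩ := hL.bddAbove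
      obtain ⟨b, hb⟩ := exists_gt a
      exact ⟨a, b, hb, ha, by simp⟩
    obtain ⟨b, hbU, hb⟩ := U.exists_min_image id hU hUne
    rcases L.eq_empty_or_nonempty with rfl | hLne
    · obtain ⟨a, ha⟩ := exists_lt b
      exact ⟨a, b, ha, by simp, hb⟩
    obtain ⟨a, haL, ha⟩ := L.exists_max_image id hL hLne
    exact ⟨a, b, hLU a haL b hbU, ha, hb⟩
  obtain ⟨y, ⟨hay, hyb⟩, hy⟩ := hP a b hab
  exact ⟨y, hy, fun l hl => (hLa l hl).trans_lt hay, fun u hu => hyb.trans_le (hbU u hu)⟩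

theorem exists_Ioo_subset_disjoint {M : Type*} [LinearOrder M] {E : Set M} (hE : E.Finite)
    {u v : M} (huv : u < v) :
    ∃ u' v', u' < v' ∧ Ioo u' v' ⊆ Ioo u v ∧ Disjoint E (Ioo u' v') := by
  rcases (E ∩ Ioo u v).eq_empty_or_nonempty with h | h
  · exact ⟨u, v, huv, subset_rfl, disjoint_iff_inter_eq_empty.2 h⟩
  obtain ⟨m, ⟨-, hm⟩, hmin⟩ := (E ∩ Ioo u v).exists_min_image id (hE.inter_of_left _) h
  refine ⟨u, m, hm.1, Ioo_subset_Ioo_right hm.2.le, disjoint_left.2 fun e he he' => ?_⟩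
  exact (hmin e ⟨he, he'.1, he'.2.trans hm.2⟩).not_gt he'.2

section Cosets

variable {F M : Type*} [Field F] [AddCommGroup M] [Module F M] {Q : Submodule F M}

theorem nontrivial_of_ne_top (hQ : Q ≠ ⊤) : Nontrivial M := by
  obtain ⟨v, -, hv⟩ := SetLike.exists_of_lt (lt_top_iff_ne_top.2 hQ)
  exact ⟨⟨v, 0, fun h => hv (h ▸ Q.zero_mem)⟩⟩

/-- A line `F • v` with `v ∉ Q` meets every coset of `Q` at most once. -/
theorem exists_forall_sub_notMem [Infinite F] (hQ : Q ≠ ⊤) {T : Set M} (hT : T.Finite) :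
    ∃ c, ∀ t ∈ T, c - t ∉ Q := by
  obtain ⟨v, -, hv⟩ := SetLike.exists_of_lt (lt_top_iff_ne_top.2 hQ)
  have hinj : Function.Injective fun r : F => Q.mkQ (r • v) := by
    intro r s h
    by_contra hrs
    simp only [Submodule.mkQ_apply, Submodule.Quotient.eq, ← sub_smul] at h
    exact hv ((Q.smul_mem_iff (sub_ne_zero.2 hrs)).1 h)
  obtain ⟨_, ⟨r, rfl⟩, hr⟩ :=
    (Set.infinite_range_of_injective hinj).exists_notMem_finite (hT.image Q.mkQ)
  exact ⟨r • v, fun t ht h => hr ⟨t, ht, (Submodule.Quotient.eq Q).2 (by simpa using Q.neg_mem h)⟩⟩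

variable [LinearOrder M] [IsOrderedAddMonoid M]

theorem exists_sub_mem_Ioo (hQ : ∀ a b : M, a < b → ∃ q ∈ Q, a < q ∧ q < b) (e : M) {a b : M}
    (hab : a < b) : ∃ y ∈ Ioo a b, y - e ∈ Q := by
  obtain ⟨q, hq, h1, h2⟩ := hQ (a - e) (b - e) (sub_lt_sub_right hab e)
  exact ⟨q + e, ⟨sub_lt_iff_lt_add.1 h1, lt_sub_iff_add_lt.1 h2⟩, by simpa using hq⟩

theorem exists_forall_sub_notMem_Ioo [Infinite F] (hQ₁ : Q ≠ ⊤)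
    (hQ : ∀ a b : M, a < b → ∃ q ∈ Q, a < q ∧ q < b) {T : Set M} (hT : T.Finite) {a b : M}
    (hab : a < b) : ∃ y ∈ Ioo a b, ∀ t ∈ T, y - t ∉ Q := by
  obtain ⟨c, hc⟩ := exists_forall_sub_notMem hQ₁ hT
  obtain ⟨y, hy, hyc⟩ := exists_sub_mem_Ioo hQ c hab
  exact ⟨y, hy, fun t ht hyt => hc t ht (by simpa using Q.sub_mem hyt hyc)⟩

end Cosets

/-- `pos` is redundant (`0 < z ↔ -z < 0`), but with it negating a literal, or solving it for one
variable, never has to change its affine form. -/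
inductive Cond
  | neg | pos | zero | mem | nmem

def Cond.flip : Cond → Cond
  | .neg => .pos
  | .pos => .neg
  | k => k

section QF

variable {F M : Type*} [Field F] [AddCommGroup M] [Module F M] {ι κ : Type*} [Fintype ι] [Fintype κ]

def affEval (a : (ι → F) × M) (v : ι → M) : M := ∑ i, a.1 i • v i + a.2

@[simp] theorem affEval_add (a b : (ι → F) × M) (v : ι → M) :
    affEval (a + b) v = affEval a v + affEval b v := by
  simp only [affEval, Prod.fst_add, Prod.snd_add, Pi.add_apply, add_smul, Finset.sum_add_distrib]
  abel

@[simp] theorem affEval_sub (a b : (ι → F) × M) (v : ι → M) :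
    affEval (a - b) v = affEval a v - affEval b v := by
  simp only [affEval, Prod.fst_sub, Prod.snd_sub, Pi.sub_apply, sub_smul, Finset.sum_sub_distrib]
  abel

@[simp] theorem affEval_neg (a : (ι → F) × M) (v : ι → M) : affEval (-a) v = -affEval a v := by
  simp only [affEval, Prod.fst_neg, Prod.snd_neg, Pi.neg_apply, neg_smul, Finset.sum_neg_distrib]
  abel

@[simp] theorem affEval_smul (c : F) (a : (ι → F) × M) (v : ι → M) :
    affEval (c • a) v = c • affEval a v := by
  simp [affEval, smul_add, Finset.smul_sum, mul_smul]

theorem affEval_comp [DecidableEq ι] (g : κ → ι) (a : (κ → F) × M) (u : ι → M) :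
    affEval a (u ∘ g) = affEval (fun i => ∑ j ∈ Finset.univ.filter (g · = i), a.1 j, a.2) u := by
  simp only [affEval, Function.comp_apply, Finset.sum_smul]
  rw [← Finset.sum_fiberwise Finset.univ g (fun j => a.1 j • u (g j))]
  refine congrArg (· + a.2) (Finset.sum_congr rfl fun i _ => Finset.sum_congr rfl fun j hj => ?_)
  rw [(Finset.mem_filter.1 hj).2]

variable [LinearOrder M] (Q : Submodule F M)

def Cond.Holds : Cond → M → Prop
  | .neg, z => z < 0
  | .pos, z => 0 < z
  | .zero, z => z = 0
  | .mem, z => z ∈ Q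
  | .nmem, z => z ∉ Q

theorem Cond.holds_sub_congr {k : Cond} (hk : k = .mem ∨ k = .nmem) {y y' : M} (h : y - y' ∈ Q)
    (t : M) : k.Holds Q (y - t) ↔ k.Holds Q (y' - t) := by
  have : y - t ∈ Q ↔ y' - t ∈ Q := by
    rw [← Q.add_mem_iff_left (x := y' - t) h, sub_add_sub_cancel']
  rcases hk with rfl | rfl <;> simp [Holds, this]

abbrev Lit (F M ι : Type*) := Cond × ((ι → F) × M)

def litSet (l : Lit F M ι) : Set (ι → M) := {v | l.1.Holds Q (affEval l.2 v)}

/-- `S` is cut out by a quantifier-free formula, written in disjunctive normal form. -/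
def QFDef (S : Set (ι → M)) : Prop :=
  ∃ d : List (List (Lit F M ι)), S = {v | ∃ c ∈ d, ∀ l ∈ c, v ∈ litSet Q l}

variable {Q} {S T : Set (ι → M)}

theorem qfDef_litSet (l : Lit F M ι) : QFDef Q (litSet Q l) :=
  ⟨[ [l] ], by ext; simp [-Prod.forall]⟩

theorem qfDef_univ : QFDef Q (univ : Set (ι → M)) := ⟨[ [] ], by ext; simp⟩

theorem qfDef_empty : QFDef Q (∅ : Set (ι → M)) := ⟨[], by simp⟩

theorem QFDef.union (hS : QFDef Q S) (hT : QFDef Q T) : QFDef Q (S ∪ T) := by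
  obtain ⟨d, rfl⟩ := hS
  obtain ⟨e, rfl⟩ := hT
  exact ⟨d ++ e, by ext; simp [or_and_right, exists_or]⟩

theorem QFDef.inter (hS : QFDef Q S) (hT : QFDef Q T) : QFDef Q (S ∩ T) := by
  obtain ⟨d, rfl⟩ := hS
  obtain ⟨e, rfl⟩ := hT
  refine ⟨d.flatMap fun c => e.map (c ++ ·), ?_⟩
  ext v
  simp only [mem_inter_iff, mem_ofPred_eq, List.mem_flatMap, List.mem_map]
  constructor
  · rintro ⟨⟨c, hc, hcv⟩, c', hc', hc'v⟩
    exact ⟨_, ⟨c, hc, c', hc', rfl⟩, fun l hl => (List.mem_append.1 hl).elim (hcv l) (hc'v l)⟩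
  · rintro ⟨_, ⟨c, hc, c', hc', rfl⟩, hv⟩
    exact ⟨⟨c, hc, fun l hl => hv l (List.mem_append_left _ hl)⟩, c', hc',
      fun l hl => hv l (List.mem_append_right _ hl)⟩

theorem QFDef.biInter_list {α : Type*} (L : List α) {S : α → Set (ι → M)}
    (h : ∀ a ∈ L, QFDef Q (S a)) : QFDef Q {v | ∀ a ∈ L, v ∈ S a} := by
  induction L with
  | nil => simpa using qfDef_univ
  | cons a L ih =>
    convert (h a (List.mem_cons_self ..)).inter (ih fun b hb => h b (List.mem_cons_of_mem _ hb))
    ext; simp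

theorem QFDef.biUnion_list {α : Type*} (L : List α) {S : α → Set (ι → M)}
    (h : ∀ a ∈ L, QFDef Q (S a)) : QFDef Q {v | ∃ a ∈ L, v ∈ S a} := by
  induction L with
  | nil => simpa using qfDef_empty
  | cons a L ih =>
    convert (h a (List.mem_cons_self ..)).union (ih fun b hb => h b (List.mem_cons_of_mem _ hb))
    ext; simp

theorem qfDef_compl_litSet (l : Lit F M ι) : QFDef Q (litSet Q l)ᶜ := by
  obtain ⟨k, a⟩ := l
  have key : ∀ k₁ k₂ : Cond, (∀ z : M, ¬ k.Holds Q z ↔ k₁.Holds Q z ∨ k₂.Holds Q z) →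
      QFDef Q (litSet Q (k, a))ᶜ := fun k₁ k₂ h => by
    convert (qfDef_litSet (Q := Q) (k₁, a)).union (qfDef_litSet (k₂, a)) using 1
    ext v
    exact h _
  cases k
  · exact key .zero .pos fun z => by simp [Cond.Holds, le_iff_eq_or_lt, eq_comm]
  · exact key .zero .neg fun z => by simp [Cond.Holds, le_iff_eq_or_lt]
  · exact key .neg .pos fun z => by simp only [Cond.Holds]; exact ne_iff_lt_or_gt
  · exact key .nmem .nmem fun z => by simp [Cond.Holds]
  · exact key .mem .mem fun z => by simp [Cond.Holds]

theorem QFDef.compl (hS : QFDef Q S) : QFDef Q Sᶜ := by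
  obtain ⟨d, rfl⟩ := hS
  convert QFDef.biInter_list d fun c _ => QFDef.biUnion_list c fun l _ => qfDef_compl_litSet l
    using 1
  ext v
  simp

theorem QFDef.induction {P : Set (ι → M) → Prop} (hlit : ∀ l, P (litSet Q l)) (huniv : P univ)
    (hinter : ∀ S T, P S → P T → P (S ∩ T)) (hcompl : ∀ S, P S → P Sᶜ) (hS : QFDef Q S) : P S := by
  obtain ⟨d, rfl⟩ := hS
  have hclause (c : List (Lit F M ι)) : P {v | ∀ l ∈ c, v ∈ litSet Q l} := by
    induction c with
    | nil => simpa using huniv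
    | cons l c ih =>
      convert hinter _ _ (hlit l) ih
      ext; simp
  induction d with
  | nil => simpa using hcompl _ huniv
  | cons c d ih =>
    convert hcompl _ (hinter _ _ (hcompl _ (hclause c)) (hcompl _ ih))
    ext
    simp only [mem_compl_iff, mem_inter_iff, mem_ofPred_eq, List.mem_cons, exists_eq_or_imp]
    exact or_iff_not_and_not

theorem QFDef.preimage_comp (g : κ → ι) {S : Set (κ → M)} (hS : QFDef Q S) :
    QFDef Q {u : ι → M | u ∘ g ∈ S} := by
  classical
  refine hS.induction (P := fun S => QFDef Q {u : ι → M | u ∘ g ∈ S}) (fun l => ?_)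
    (by simpa using qfDef_univ) (fun _ _ h₁ h₂ => h₁.inter h₂) (fun _ h => h.compl)
  convert qfDef_litSet (l.1, (fun i => ∑ j ∈ Finset.univ.filter (g · = i), l.2.1 j, l.2.2)) using 1
  ext u
  simp [litSet, affEval_comp]

theorem QFDef.setOf_imp (p : Prop) {S : Set (ι → M)} (hS : QFDef Q S) :
    QFDef Q {v | p → v ∈ S} := by
  by_cases hp : p
  · simpa [hp] using hS
  · simpa [hp] using qfDef_univ

end QF

section Elimination

variable {F M : Type*} [Field F] [AddCommGroup M] [LinearOrder M] [Module F M] {Q : Submodule F M}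
  {ι : Type*} [Fintype ι]

theorem exists_forall_holds_iff_of_zero {ys : List (Lit F M ι)} {e : (ι → F) × M}
    (he : (.zero, e) ∈ ys) (v : ι → M) :
    (∃ y, ∀ t ∈ ys, t.1.Holds Q (y - affEval t.2 v)) ↔ ∀ t ∈ ys, v ∈ litSet Q (t.1, e - t.2) := by
  simp only [litSet, mem_ofPred_eq, affEval_sub]
  refine ⟨fun ⟨y, hy⟩ => ?_, fun h => ⟨_, h⟩⟩
  obtain rfl : y = affEval e v := sub_eq_zero.1 (hy _ he)
  exact hy

variable [IsOrderedAddMonoid M]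

theorem bounds_of_forall_holds {ys : List (Lit F M ι)} {v : ι → M} {y : M}
    (hy : ∀ t ∈ ys, t.1.Holds Q (y - affEval t.2 v)) :
    ∀ t ∈ ys, ∀ s ∈ ys, t.1 = .pos → s.1 = .neg → affEval t.2 v < affEval s.2 v := by
  intro t ht s hs htk hsk
  have h₁ := hy t ht
  have h₂ := hy s hs
  rw [htk] at h₁
  rw [hsk] at h₂
  exact (sub_pos.1 h₁).trans (sub_neg.1 h₂)

theorem exists_forall_bounds_holds [Nontrivial M] {ys : List (Lit F M ι)} {v : ι → M}
    {P : M → Prop} (hP : ∀ a b, a < b → ∃ y ∈ Ioo a b, P y)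
    (hbounds : ∀ t ∈ ys, ∀ s ∈ ys, t.1 = .pos → s.1 = .neg → affEval t.2 v < affEval s.2 v) :
    ∃ y, P y ∧ ∀ t ∈ ys, (t.1 = .pos ∨ t.1 = .neg) → t.1.Holds Q (y - affEval t.2 v) := by
  have hfin (k : Cond) : ((fun t : Lit F M ι => affEval t.2 v) '' {t | t ∈ ys ∧ t.1 = k}).Finite :=
    (ys.finite_toSet.subset fun _ ht => ht.1).image _
  obtain ⟨y, hy, hL, hU⟩ := exists_between_of_finite hP (hfin .pos) (hfin .neg) (by
    rintro _ ⟨t, ⟨ht, htk⟩, rfl⟩ _ ⟨s, ⟨hs, hsk⟩, rfl⟩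
    exact hbounds t ht s hs htk hsk)
  refine ⟨y, hy, fun t ht hk => ?_⟩
  rcases hk with hk | hk <;> rw [hk] <;> simp only [Cond.Holds]
  · exact sub_pos.2 (hL _ ⟨t, ⟨ht, hk⟩, rfl⟩)
  · exact sub_neg.2 (hU _ ⟨t, ⟨ht, hk⟩, rfl⟩)

theorem exists_forall_holds_iff_of_mem [Nontrivial M]
    (hQ : ∀ a b : M, a < b → ∃ q ∈ Q, a < q ∧ q < b) {ys : List (Lit F M ι)} {e : (ι → F) × M} (hz : ∀ t ∈ ys, t.1 ≠ .zero)
    (he : (.mem, e) ∈ ys) (v : ι → M) :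
    (∃ y, ∀ t ∈ ys, t.1.Holds Q (y - affEval t.2 v)) ↔
      (∀ t ∈ ys, ∀ s ∈ ys, t.1 = .pos → s.1 = .neg → v ∈ litSet Q (.neg, t.2 - s.2)) ∧
      ∀ t ∈ ys, (t.1 = .mem ∨ t.1 = .nmem) → v ∈ litSet Q (t.1, e - t.2) := by
  simp only [litSet, mem_ofPred_eq, affEval_sub, Cond.Holds, sub_neg]
  constructor
  · rintro ⟨y, hy⟩
    have hye : y - affEval e v ∈ Q := hy _ he
    exact ⟨bounds_of_forall_holds hy, fun t ht hk => (Cond.holds_sub_congr Q hk hye _).1 (hy t ht)⟩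
  · rintro ⟨hbounds, hcosets⟩
    obtain ⟨y, hye, hy⟩ := exists_forall_bounds_holds (Q := Q)
      (fun _ _ => exists_sub_mem_Ioo hQ (affEval e v)) hbounds
    refine ⟨y, fun t ht => ?_⟩
    obtain ⟨_ | _ | _ | _ | _, a⟩ := t
    · exact hy _ ht (.inr rfl)
    · exact hy _ ht (.inl rfl)
    · exact absurd rfl (hz _ ht)
    · exact (Cond.holds_sub_congr Q (.inl rfl) hye _).2 (hcosets _ ht (.inl rfl))
    · exact (Cond.holds_sub_congr Q (.inr rfl) hye _).2 (hcosets _ ht (.inr rfl))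

theorem exists_forall_holds_iff_of_forall_ne [Infinite F] (hQ₁ : Q ≠ ⊤)
    (hQ : ∀ a b : M, a < b → ∃ q ∈ Q, a < q ∧ q < b) {ys : List (Lit F M ι)}
    (hz : ∀ t ∈ ys, t.1 ≠ .zero ∧ t.1 ≠ .mem) (v : ι → M) :
    (∃ y, ∀ t ∈ ys, t.1.Holds Q (y - affEval t.2 v)) ↔
      ∀ t ∈ ys, ∀ s ∈ ys, t.1 = .pos → s.1 = .neg → v ∈ litSet Q (.neg, t.2 - s.2) := by
  have := nontrivial_of_ne_top hQ₁
  simp only [litSet, mem_ofPred_eq, affEval_sub, Cond.Holds, sub_neg]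
  constructor
  · exact fun ⟨y, hy⟩ => bounds_of_forall_holds hy
  · intro hbounds
    have hfin : ((fun t : Lit F M ι => affEval t.2 v) '' {t | t ∈ ys ∧ t.1 = .nmem}).Finite :=
      (ys.finite_toSet.subset fun _ ht => ht.1).image _
    obtain ⟨y, hyQ, hy⟩ := exists_forall_bounds_holds (Q := Q)
      (fun a b hab => exists_forall_sub_notMem_Ioo hQ₁ hQ hfin hab) hbounds
    refine ⟨y, fun t ht => ?_⟩
    obtain ⟨_ | _ | _ | _ | _, a⟩ := t
    · exact hy _ ht (.inr rfl)
    · exact hy _ ht (.inl rfl)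
    · exact absurd rfl (hz _ ht).1
    · exact absurd rfl (hz _ ht).2
    · exact hyQ _ ⟨_, ⟨ht, rfl⟩, rfl⟩

theorem qfDef_exists_forall_holds [Infinite F] (hQ₁ : Q ≠ ⊤)
    (hQ : ∀ a b : M, a < b → ∃ q ∈ Q, a < q ∧ q < b) (ys : List (Lit F M ι)) :
    QFDef Q {v | ∃ y, ∀ t ∈ ys, t.1.Holds Q (y - affEval t.2 v)} := by
  have := nontrivial_of_ne_top hQ₁
  by_cases h0 : ∃ e, (.zero, e) ∈ ys
  · obtain ⟨e, he⟩ := h0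
    convert QFDef.biInter_list ys fun t _ => qfDef_litSet (Q := Q) (t.1, e - t.2) using 1
    ext v
    exact exists_forall_holds_iff_of_zero he v
  simp only [not_exists] at h0
  have hbounds : QFDef Q
      {v | ∀ t ∈ ys, ∀ s ∈ ys, t.1 = .pos → s.1 = .neg → v ∈ litSet Q (.neg, t.2 - s.2)} :=
    QFDef.biInter_list ys fun t _ => QFDef.biInter_list ys fun s _ =>
      QFDef.setOf_imp _ (QFDef.setOf_imp _ (qfDef_litSet _))
  by_cases hm : ∃ e, (.mem, e) ∈ ys
  · obtain ⟨e, he⟩ := hm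
    convert hbounds.inter (QFDef.biInter_list ys
      (S := fun t => {v | t.1 = .mem ∨ t.1 = .nmem → v ∈ litSet Q (t.1, e - t.2)})
      fun t _ => QFDef.setOf_imp _ (qfDef_litSet _)) using 1
    ext v
    exact exists_forall_holds_iff_of_mem hQ (fun t ht h => h0 t.2 (h ▸ ht)) he v
  simp only [not_exists] at hm
  convert hbounds using 1
  ext v
  exact exists_forall_holds_iff_of_forall_ne hQ₁ hQ
    (fun t ht => ⟨fun h => h0 t.2 (h ▸ ht), fun h => hm t.2 (h ▸ ht)⟩) v

variable [LinearOrder F] [IsStrictOrderedRing F] [PosSMulStrictMono F M]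

theorem Cond.holds_smul (k : Cond) {c : F} (hc : c ≠ 0) (z : M) :
    k.Holds Q (c • z) ↔ (if c < 0 then k.flip else k).Holds Q z := by
  split_ifs with hneg
  · cases k <;> simp [Holds, flip, smul_neg_iff_of_neg_left hneg, smul_pos_iff_of_neg_left hneg,
      hc, Q.smul_mem_iff hc]
  · have hpos : 0 < c := lt_of_le_of_ne (not_lt.1 hneg) hc.symm
    cases k <;> simp [Holds, smul_neg_iff_of_pos_left hpos, smul_pos_iff_of_pos_left hpos, hc,
      Q.smul_mem_iff hc]

def extendVal (v : ι → M) (y : M) : Option ι → M := fun o => o.elim y v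

/-- Solves a literal over `Option ι` for the coordinate `none`: `inl` if it does not occur, and
otherwise `inr (k, t)`, standing for the condition `k.Holds Q (y - t)` on its value `y`. -/
def splitLit (l : Lit F M (Option ι)) : Lit F M ι ⊕ Lit F M ι :=
  let c := l.2.1 none
  let b : (ι → F) × M := (fun i => l.2.1 (some i), l.2.2)
  if c = 0 then .inl (l.1, b) else .inr (if c < 0 then l.1.flip else l.1, -(c⁻¹ • b))

theorem extendVal_mem_litSet_iff (l : Lit F M (Option ι)) (v : ι → M) (y : M) :
    extendVal v y ∈ litSet Q l ↔ Sum.elim (fun b => v ∈ litSet Q b)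
      (fun t => t.1.Holds Q (y - affEval t.2 v)) (splitLit l) := by
  obtain ⟨k, f, m⟩ := l
  set b : (ι → F) × M := (fun i => f (some i), m)
  have hsplit : affEval (f, m) (extendVal v y) = f none • y + affEval b v := by
    simp [affEval, Fintype.sum_option, extendVal, b, add_assoc]
  by_cases hc : f none = 0
  · simp [splitLit, hc, litSet, hsplit, b]
  · have hsolve : f none • y + affEval b v = f none • (y - affEval (-((f none)⁻¹ • b)) v) := by
      simp [smul_inv_smul₀ hc]
    simp only [splitLit, hc, if_false, litSet, mem_ofPred_eq, Sum.elim_inr]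
    rw [hsplit, hsolve, k.holds_smul hc]

theorem forall_extendVal_mem_litSet_iff (c : List (Lit F M (Option ι)))
    (v : ι → M) (y : M) : (∀ l ∈ c, extendVal v y ∈ litSet Q l) ↔
      (∀ b ∈ c.filterMap (splitLit · |>.getLeft?), v ∈ litSet Q b) ∧
      ∀ t ∈ c.filterMap (splitLit · |>.getRight?), t.1.Holds Q (y - affEval t.2 v) := by
  simp only [List.mem_filterMap, forall_exists_index, and_imp]
  constructor
  · intro h
    refine ⟨fun b l hl hb => ?_, fun t l hl ht => ?_⟩
    · simpa [Sum.getLeft?_eq_some_iff.1 hb] using (extendVal_mem_litSet_iff l v y).1 (h l hl)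
    · simpa [Sum.getRight?_eq_some_iff.1 ht] using (extendVal_mem_litSet_iff l v y).1 (h l hl)
  · rintro ⟨hb, ht⟩ l hl
    rw [extendVal_mem_litSet_iff]
    rcases h : splitLit l with b | t
    · exact hb b l hl (by simp [h])
    · exact ht t l hl (by simp [h])

theorem QFDef.exists_extendVal (hQ₁ : Q ≠ ⊤)
    (hQ : ∀ a b : M, a < b → ∃ q ∈ Q, a < q ∧ q < b) {S : Set (Option ι → M)} (hS : QFDef Q S) :
    QFDef Q {v | ∃ y, extendVal v y ∈ S} := by
  obtain ⟨d, rfl⟩ := hS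
  convert QFDef.biUnion_list d (S := fun c =>
    {v | ∀ b ∈ c.filterMap (splitLit · |>.getLeft?), v ∈ litSet Q b} ∩
      {v | ∃ y, ∀ t ∈ c.filterMap (splitLit · |>.getRight?), t.1.Holds Q (y - affEval t.2 v)})
    fun c _ => (QFDef.biInter_list _ fun b _ => qfDef_litSet b).inter
      (qfDef_exists_forall_holds hQ₁ hQ _) using 1
  ext v
  simp only [mem_ofPred_eq, mem_inter_iff, forall_extendVal_mem_litSet_iff, ← exists_and_left]
  exact exists_comm

theorem QFDef.forall_extendVal (hQ₁ : Q ≠ ⊤)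
    (hQ : ∀ a b : M, a < b → ∃ q ∈ Q, a < q ∧ q < b) {S : Set (Option ι → M)} (hS : QFDef Q S) :
    QFDef Q {v | ∀ y, extendVal v y ∈ S} := by
  convert (hS.compl.exists_extendVal hQ₁ hQ).compl using 1
  ext
  simp

end Elimination

section QuantifierElimination

variable {F M : Type} [Field F] [AddCommGroup M] [LinearOrder M] [Module F M]

theorem exists_realize_eq_affEval (one : M) (Q : Set M) {β : Type} [Fintype β] :
    letI := LPStruc F M one Q
    ∀ t : ((LP F)[[(univ : Set M)]]).Term β, ∃ a : (β → F) × M, ∀ w, t.realize w = affEval a w := by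
  classical
  intro t
  induction t with
  | var i => exact ⟨(Pi.single i 1, 0), fun w => by simp [affEval, Pi.single_apply]⟩
  | @func l f ts ih =>
    choose a ha using ih
    rcases f with f | c
    · cases f with
      | add => exact ⟨a 0 + a 1, fun w => by rw [affEval_add, ← ha, ← ha]; rfl⟩
      | neg => exact ⟨-a 0, fun w => by rw [affEval_neg, ← ha]; rfl⟩
      | zero => exact ⟨0, fun w => by simp [affEval]; rfl⟩
      | one => exact ⟨(0, one), fun w => by simp [affEval]; rfl⟩
      | smul r => exact ⟨r • a 0, fun w => by rw [affEval_smul, ← ha]; rfl⟩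
    · match l, c with
      | 0, c => exact ⟨(0, (c : univ)), fun w => by simp [affEval]; rfl⟩

theorem qfDef_setOf_realize_rel [IsOrderedAddMonoid M] {Q : Submodule F M} (one : M) {α : Type}
    [Fintype α] {n l : ℕ} :
    letI := LPStruc F M one Q
    ∀ (R : ((LP F)[[(univ : Set M)]]).Relations l)
      (ts : Fin l → ((LP F)[[(univ : Set M)]]).Term (α ⊕ Fin n)),
      QFDef Q {w | (BoundedFormula.rel R ts).Realize (w ∘ Sum.inl) (w ∘ Sum.inr)} := by
  let _ := LPStruc F M one Q
  intro R ts
  rcases R with R | R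
  · cases R with
    | lt =>
      obtain ⟨a₀, ha₀⟩ := exists_realize_eq_affEval one Q (ts 0)
      obtain ⟨a₁, ha₁⟩ := exists_realize_eq_affEval one Q (ts 1)
      convert qfDef_litSet (Q := Q) (.neg, a₀ - a₁) using 1
      ext w
      simp only [mem_ofPred_eq, litSet, Cond.Holds, affEval_sub, sub_neg, ← ha₀, ← ha₁]
      change (ts 0).realize (Sum.elim (w ∘ Sum.inl) (w ∘ Sum.inr)) <
        (ts 1).realize (Sum.elim (w ∘ Sum.inl) (w ∘ Sum.inr)) ↔ _
      rw [Sum.elim_comp_inl_inr]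
    | q =>
      obtain ⟨a₀, ha₀⟩ := exists_realize_eq_affEval one Q (ts 0)
      convert qfDef_litSet (Q := Q) (.mem, a₀) using 1
      ext w
      simp only [mem_ofPred_eq, litSet, Cond.Holds, ← ha₀]
      change (ts 0).realize (Sum.elim (w ∘ Sum.inl) (w ∘ Sum.inr)) ∈ Q ↔ _
      rw [Sum.elim_comp_inl_inr]
  · exact isEmptyElim R

variable [LinearOrder F] [IsStrictOrderedRing F] [IsOrderedAddMonoid M] [PosSMulStrictMono F M]
  {Q : Submodule F M}

theorem qfDef_setOf_realize (hQ₁ : Q ≠ ⊤) (hQ : ∀ a b : M, a < b → ∃ q ∈ Q, a < q ∧ q < b)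
    (one : M) {α : Type} [Fintype α] :
    letI := LPStruc F M one Q
    ∀ {n} (ψ : ((LP F)[[(univ : Set M)]]).BoundedFormula α n),
      QFDef Q {w : α ⊕ Fin n → M | ψ.Realize (w ∘ Sum.inl) (w ∘ Sum.inr)} := by
  let _ := LPStruc F M one Q
  intro n ψ
  induction ψ with
  | falsum => simpa [BoundedFormula.Realize] using qfDef_empty
  | equal t₁ t₂ =>
    obtain ⟨a₁, ha₁⟩ := exists_realize_eq_affEval one Q t₁
    obtain ⟨a₂, ha₂⟩ := exists_realize_eq_affEval one Q t₂
    convert qfDef_litSet (Q := Q) (.zero, a₁ - a₂) using 1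
    ext w
    simp [BoundedFormula.Realize, litSet, Cond.Holds, ha₁, ha₂, sub_eq_zero]
  | rel R ts => exact qfDef_setOf_realize_rel one R ts
  | imp φ₁ φ₂ ih₁ ih₂ =>
    convert ih₁.compl.union ih₂ using 1
    ext w
    simp [imp_iff_not_or]
  | @all n ψ ih =>
    let g : α ⊕ Fin (n + 1) → Option (α ⊕ Fin n) :=
      Sum.elim (some ∘ Sum.inl) fun j => Fin.lastCases none (some ∘ Sum.inr) j
    convert (ih.preimage_comp g).forall_extendVal hQ₁ hQ using 1
    ext w
    simp only [BoundedFormula.realize_all, mem_ofPred_eq]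
    refine forall_congr' fun y => iff_of_eq (congrArg₂ _ rfl (funext fun j => ?_))
    refine Fin.lastCases ?_ (fun i => ?_) j <;> simp [g, extendVal]

theorem QFDef.of_povsDefinable (hQ₁ : Q ≠ ⊤) (hQ : ∀ a b : M, a < b → ∃ q ∈ Q, a < q ∧ q < b)
    {one : M} {k : ℕ} {S : Set (Fin k → M)} (hS : POVSDefinable F M one Q S) :
    QFDef Q S := by
  let _ := LPStruc F M one Q
  obtain ⟨φ, rfl⟩ := hS
  convert (qfDef_setOf_realize hQ₁ hQ one φ).preimage_comp (Sum.elim id finZeroElim) using 1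
  ext u
  simp only [mem_ofPred_eq, Formula.Realize]
  exact iff_of_eq (congrArg₂ _ rfl (Subsingleton.elim _ _))

end QuantifierElimination

section PiecewiseCoset

variable {F M : Type*} [Field F] [AddCommGroup M] [LinearOrder M] [Module F M] {Q : Submodule F M}

def IsPiecewiseCoset (Q : Submodule F M) (S : Set M) : Prop :=
  ∃ E : Set M, E.Finite ∧ ∃ 𝒯 : Set (Set (M ⧸ Q)), 𝒯.Finite ∧ (∀ T ∈ 𝒯, T.Finite ∨ Tᶜ.Finite) ∧
    ∀ u v, Disjoint E (Ioo u v) → ∃ T ∈ 𝒯, Ioo u v ∩ S = Ioo u v ∩ Q.mkQ ⁻¹' T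

theorem isPiecewiseCoset_preimage_mkQ {T : Set (M ⧸ Q)} (hT : T.Finite ∨ Tᶜ.Finite) :
    IsPiecewiseCoset Q (Q.mkQ ⁻¹' T) :=
  ⟨∅, finite_empty, {T}, finite_singleton T, by simpa using hT, fun _ _ _ => ⟨T, rfl, rfl⟩⟩

theorem isPiecewiseCoset_of_forall_Ioo {S : Set M} (e : M)
    (h : ∀ u v, e ∉ Ioo u v → Ioo u v ⊆ S ∨ Disjoint (Ioo u v) S) : IsPiecewiseCoset Q S := by
  refine ⟨{e}, finite_singleton e, {univ, ∅}, by simp, by simp, fun u v huv => ?_⟩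
  rcases h u v (disjoint_singleton_left.1 huv) with hS | hS
  · exact ⟨univ, by simp, by simpa using hS⟩
  · exact ⟨∅, by simp, by simpa [inter_comm] using hS.inter_eq⟩

theorem IsPiecewiseCoset.inter {S S' : Set M} (h : IsPiecewiseCoset Q S)
    (h' : IsPiecewiseCoset Q S') : IsPiecewiseCoset Q (S ∩ S') := by
  obtain ⟨E, hE, 𝒯, h𝒯, hT, hS⟩ := h
  obtain ⟨E', hE', 𝒯', h𝒯', hT', hS'⟩ := h'
  refine ⟨E ∪ E', hE.union hE', image2 (· ∩ ·) 𝒯 𝒯', h𝒯.image2 _ h𝒯', ?_, fun u v huv => ?_⟩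
  · rintro _ ⟨T, hT₁, T', hT'₁, rfl⟩
    rcases hT T hT₁ with h | h
    · exact .inl (h.subset inter_subset_left)
    rcases hT' T' hT'₁ with h' | h'
    · exact .inl (h'.subset inter_subset_right)
    · exact .inr (by simpa [compl_inter] using h.union h')
  · obtain ⟨T, hT₁, hT₂⟩ := hS u v (disjoint_union_left.1 huv).1
    obtain ⟨T', hT'₁, hT'₂⟩ := hS' u v (disjoint_union_left.1 huv).2
    refine ⟨T ∩ T', mem_image2_of_mem hT₁ hT'₁, ?_⟩
    rw [inter_inter_distrib_left, hT₂, hT'₂, ← inter_inter_distrib_left, preimage_inter]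

theorem IsPiecewiseCoset.compl {S : Set M} (h : IsPiecewiseCoset Q S) :
    IsPiecewiseCoset Q Sᶜ := by
  obtain ⟨E, hE, 𝒯, h𝒯, hT, hS⟩ := h
  refine ⟨E, hE, Compl.compl '' 𝒯, h𝒯.image _, ?_, fun u v huv => ?_⟩
  · rintro _ ⟨T, hT₁, rfl⟩
    simpa [or_comm] using hT T hT₁
  · obtain ⟨T, hT₁, hT₂⟩ := hS u v huv
    refine ⟨Tᶜ, mem_image_of_mem _ hT₁, ?_⟩
    rw [← sdiff_eq, ← sdiff_self_inter, hT₂, sdiff_self_inter, sdiff_eq, preimage_compl]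

theorem isPiecewiseCoset_setOf_holds_sub [IsOrderedAddMonoid M] (k : Cond) (e : M) :
    IsPiecewiseCoset Q {x | k.Holds Q (x - e)} := by
  have hmem : {x | x - e ∈ Q} = Q.mkQ ⁻¹' {Q.mkQ e} := by
    ext x
    simp [Submodule.Quotient.eq]
  have hside (u v : M) (he : e ∉ Ioo u v) : (∀ x ∈ Ioo u v, e < x) ∨ ∀ x ∈ Ioo u v, x < e := by
    rcases le_or_gt e u with h | h
    · exact .inl fun x hx => h.trans_lt hx.1
    · exact .inr fun x hx => hx.2.trans_le (not_lt.1 fun h' => he ⟨h, h'⟩)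
  cases k
  · refine isPiecewiseCoset_of_forall_Ioo e fun u v he => (hside u v he).symm.imp
      (fun h x hx => sub_neg.2 (h x hx)) fun h => disjoint_left.2 fun x hx hxS => ?_
    exact (h x hx).not_gt (sub_neg.1 hxS)
  · refine isPiecewiseCoset_of_forall_Ioo e fun u v he => (hside u v he).imp
      (fun h x hx => sub_pos.2 (h x hx)) fun h => disjoint_left.2 fun x hx hxS => ?_
    exact (h x hx).not_gt (sub_pos.1 hxS)
  · refine isPiecewiseCoset_of_forall_Ioo e fun u v he => .inr (disjoint_left.2 fun x hx hxS => ?_)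
    obtain rfl : x = e := sub_eq_zero.1 hxS
    exact he hx
  · exact hmem ▸ isPiecewiseCoset_preimage_mkQ (.inl (finite_singleton _))
  · have hnmem : {x | Cond.nmem.Holds Q (x - e)} = Q.mkQ ⁻¹' {Q.mkQ e}ᶜ := by
      rw [preimage_compl, ← hmem]
      rfl
    exact hnmem ▸ isPiecewiseCoset_preimage_mkQ (.inr (by simp))

theorem IsPiecewiseCoset.of_qfDef [LinearOrder F] [IsStrictOrderedRing F] [IsOrderedAddMonoid M]
    [PosSMulStrictMono F M] {ι : Type*} [Fintype ι] {S : Set (ι → M)} (hS : QFDef Q S) :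
    IsPiecewiseCoset Q {x | (fun _ => x) ∈ S} := by
  refine hS.induction (P := fun S => IsPiecewiseCoset Q {x | (fun _ => x) ∈ S}) (fun l => ?_)
    (by simpa using isPiecewiseCoset_preimage_mkQ (T := univ) (.inr (by simp)))
    (fun _ _ h h' => h.inter h') (fun _ h => h.compl)
  obtain ⟨k, f, m⟩ := l
  have heval (x : M) : affEval (f, m) (fun _ : ι => x) = (∑ i, f i) • x + m := by
    simp [affEval, Finset.sum_smul]
  by_cases hc : ∑ i, f i = 0
  · by_cases hk : k.Holds Q m
    · simpa [litSet, heval, hc, hk] using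
        isPiecewiseCoset_preimage_mkQ (Q := Q) (T := univ) (.inr (by simp))
    · simpa [litSet, heval, hc, hk] using
        isPiecewiseCoset_preimage_mkQ (Q := Q) (T := ∅) (.inl finite_empty)
  · have hsolve (x : M) : (∑ i, f i) • x + m = (∑ i, f i) • (x - -((∑ i, f i)⁻¹ • m)) := by
      simp [smul_inv_smul₀ hc]
    simp only [litSet, mem_ofPred_eq, heval, hsolve, k.holds_smul hc]
    exact isPiecewiseCoset_setOf_holds_sub _ _

end PiecewiseCoset

section ExtendedIntervals

variable {M : Type} [LinearOrder M]

theorem exists_lt_toExt_iff (a : WithBot (WithTop M)) (p q : M) :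
    ∃ a' : M, ∀ x ∈ Ioo p q, (a < toExt M x ↔ a' < x) := by
  induction a using WithBot.recBotCoe with
  | bot => exact ⟨p, fun x hx => by simp [toExt, hx.1]⟩
  | coe a =>
    induction a using WithTop.recTopCoe with
    | top => exact ⟨q, fun x hx => by simp [toExt, hx.2.not_gt]⟩
    | coe a => exact ⟨a, fun x _ => by simp [toExt]⟩

theorem exists_toExt_lt_iff (b : WithBot (WithTop M)) (p q : M) :
    ∃ b' : M, ∀ x ∈ Ioo p q, (toExt M x < b ↔ x < b') := by
  induction b using WithBot.recBotCoe with
  | bot => exact ⟨p, fun x hx => by simp [toExt, hx.1.not_gt]⟩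
  | coe b =>
    induction b using WithTop.recTopCoe with
    | top => exact ⟨q, fun x hx => iff_of_true (WithBot.coe_lt_coe.2 (WithTop.coe_lt_top x)) hx.2⟩
    | coe b => exact ⟨b, fun x _ => by simp [toExt]⟩

theorem exists_Ioo_inter_extIoo_eq (p q : M) (a b : WithBot (WithTop M)) :
    ∃ a' b' : M, Ioo p q ∩ extIoo M a b = Ioo a' b' := by
  obtain ⟨a', ha'⟩ := exists_lt_toExt_iff a p q
  obtain ⟨b', hb'⟩ := exists_toExt_lt_iff b p q
  refine ⟨max p a', min q b', ext fun x => ?_⟩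
  simp only [mem_inter_iff, extIoo, mem_ofPred_eq, mem_Ioo, max_lt_iff, lt_min_iff]
  constructor
  · rintro ⟨hx, ha, hb⟩
    exact ⟨⟨hx.1, (ha' x hx).1 ha⟩, hx.2, (hb' x hx).1 hb⟩
  · rintro ⟨⟨hp, ha⟩, hq, hb⟩
    exact ⟨⟨hp, hq⟩, (ha' x ⟨hp, hq⟩).2 ha, (hb' x ⟨hp, hq⟩).2 hb⟩

theorem extIoo_toExt (a b : M) : extIoo M (toExt M a) (toExt M b) = Ioo a b := by
  ext x
  simp [extIoo, toExt]

end ExtendedIntervals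

def nearOpenPartWith {M : Type*} [AddCommGroup M] [LinearOrder M] (D S : Set M) : Set M :=
  {x | ∃ ε, 0 < ε ∧ (Ioo (x - ε) (x + ε) ∩ S).Nonempty ∧
    ∃ a b, Ioo (x - ε) (x + ε) ∩ S = Ioo a b ∩ D}

section NearIntervals

variable {F M : Type} [Field F] [AddCommGroup M] [Module F M] {Q : Submodule F M}

theorem cosetUnion_eq_preimage_mkQ (C : Finset M) :
    cosetUnion M Q C = Q.mkQ ⁻¹' (Q.mkQ '' C) := by
  ext x
  simp only [cosetUnion, mem_iUnion, mem_ofPred_eq, mem_preimage, mem_image,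
    Submodule.mkQ_apply, SetLike.mem_coe, exists_prop]
  refine exists_congr fun c => and_congr_right fun _ => ?_
  rw [eq_comm, Submodule.Quotient.eq]

theorem exists_cosetUnion_eq_preimage_mkQ {T : Set (M ⧸ Q)} (hT : T.Finite) :
    ∃ C : Finset M, cosetUnion M Q C = Q.mkQ ⁻¹' T := by
  obtain ⟨t, -, ht, rfl⟩ := exists_subset_image_finite_and (f := Q.mkQ) (s := univ) (p := (· = T)).1
    ⟨T, by rw [image_univ_of_surjective Q.mkQ_surjective]; exact subset_univ T, hT, rfl⟩
  exact ⟨ht.toFinset, by rw [cosetUnion_eq_preimage_mkQ, Finite.coe_toFinset]⟩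

variable [LinearOrder M]

theorem nearInterval_Ioo_inter_iff {p q : M} {S : Set M} :
    NearInterval M Q (Ioo p q ∩ S) ↔ (Ioo p q ∩ S).Nonempty ∧
      ∃ a b : M, ∃ T : Set (M ⧸ Q), (T.Finite ∨ Tᶜ.Finite) ∧
        Ioo p q ∩ S = Ioo a b ∩ Q.mkQ ⁻¹' T := by
  refine and_congr_right fun hne => ⟨?_, ?_⟩
  · rintro ⟨a, b, C, -, hS⟩
    obtain ⟨a', b', hab⟩ := exists_Ioo_inter_extIoo_eq p q a b
    have hW : Ioo p q ∩ S = Ioo p q ∩ (Ioo p q ∩ S) := by rw [← inter_assoc, inter_self]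
    rcases hS with hS | hS
    · refine ⟨a', b', Q.mkQ '' C, .inl (C.finite_toSet.image _), ?_⟩
      rw [hW, hS, ← inter_assoc, hab, cosetUnion_eq_preimage_mkQ]
    · refine ⟨a', b', (Q.mkQ '' C)ᶜ, .inr (by simpa using C.finite_toSet.image _), ?_⟩
      rw [hW, hS, ← inter_sdiff_assoc, hab, sdiff_eq, cosetUnion_eq_preimage_mkQ, preimage_compl]
  · rintro ⟨a, b, T, hT, hS⟩
    have hab : toExt M a < toExt M b := by
      obtain ⟨x, hx⟩ := hne
      rw [hS] at hx
      simpa [toExt] using hx.1.1.trans hx.1.2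
    rcases hT with hT | hT
    · obtain ⟨C, hC⟩ := exists_cosetUnion_eq_preimage_mkQ hT
      exact ⟨_, _, C, hab, .inl (by rw [hS, extIoo_toExt, hC])⟩
    · obtain ⟨C, hC⟩ := exists_cosetUnion_eq_preimage_mkQ hT
      refine ⟨_, _, C, hab, .inr ?_⟩
      rw [hS, extIoo_toExt, hC, preimage_compl, sdiff_eq, _root_.compl_compl]

variable [IsOrderedAddMonoid M]

/-- Since `Q` is dense, every coset meets every open interval. -/
theorem eq_of_Ioo_inter_preimage_mkQ_eq (hQ : ∀ a b : M, a < b → ∃ q ∈ Q, a < q ∧ q < b)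
    {u v : M} (huv : u < v) {T T' : Set (M ⧸ Q)}
    (h : Ioo u v ∩ Q.mkQ ⁻¹' T = Ioo u v ∩ Q.mkQ ⁻¹' T') : T = T' := by
  ext z
  obtain ⟨x, rfl⟩ := Q.mkQ_surjective z
  obtain ⟨y, hy, hyx⟩ := exists_sub_mem_Ioo hQ x huv
  have hxy : Q.mkQ y = Q.mkQ x := (Submodule.Quotient.eq Q).2 hyx
  simpa [hy, hxy] using congrArg (y ∈ ·) h

theorem IsPiecewiseCoset.nearOpenPart_eq_biUnion
    (hQ : ∀ a b : M, a < b → ∃ q ∈ Q, a < q ∧ q < b) {S : Set M} (hS : IsPiecewiseCoset Q S) :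
    ∃ 𝒯 : Set (Set (M ⧸ Q)), 𝒯.Finite ∧ (∀ T ∈ 𝒯, T.Finite ∨ Tᶜ.Finite) ∧
      nearOpenPart M Q S = ⋃ T ∈ 𝒯, nearOpenPartWith (Q.mkQ ⁻¹' T) S := by
  obtain ⟨E, hE, 𝒯, h𝒯, hT, hloc⟩ := hS
  refine ⟨𝒯, h𝒯, hT, ext fun x => ?_⟩
  simp only [nearOpenPart, nearOpenPartWith, nearInterval_Ioo_inter_iff, mem_ofPred_eq, mem_iUnion,
    exists_prop]
  constructor
  · rintro ⟨ε, hε, ⟨t, ht⟩, a, b, T', -, hT'⟩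
    have hW : Ioo (x - ε) (x + ε) ∩ Ioo a b ⊆ Ioo (x - ε) (x + ε) := inter_subset_left
    have htab : t ∈ Ioo (x - ε) (x + ε) ∩ Ioo a b := ⟨ht.1, (hT' ▸ ht).1⟩
    rw [Ioo_inter_Ioo] at htab hW
    obtain ⟨u, v, huv, hsub, hdisj⟩ := exists_Ioo_subset_disjoint hE (htab.1.trans htab.2)
    rw [← Ioo_inter_Ioo] at hsub
    obtain ⟨T, hT𝒯, hTS⟩ := hloc u v hdisj
    have hT'S : Ioo u v ∩ S = Ioo u v ∩ Q.mkQ ⁻¹' T' := by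
      calc Ioo u v ∩ S = Ioo u v ∩ (Ioo (x - ε) (x + ε) ∩ S) := by
            rw [← inter_assoc, inter_eq_left.2 (hsub.trans inter_subset_left)]
        _ = Ioo u v ∩ Q.mkQ ⁻¹' T' := by
            rw [hT', ← inter_assoc, inter_eq_left.2 (hsub.trans inter_subset_right)]
    obtain rfl := eq_of_Ioo_inter_preimage_mkQ_eq hQ huv (hTS.symm.trans hT'S)
    exact ⟨T, hT𝒯, ε, hε, ⟨t, ht⟩, a, b, hT'⟩
  · rintro ⟨T, hT𝒯, ε, hε, hne, a, b, hTS⟩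
    exact ⟨ε, hε, hne, a, b, T, hT T hT𝒯, hTS⟩

end NearIntervals

section Definability

variable {M : Type*} {L : Language} [L.Structure M] {A : Set M} {α : Type*}

theorem definable_setOf_mem {S : Set M} (hS : A.Definable L {p : Fin 1 → M | p 0 ∈ S})
    {f : (α → M) → M} (hf : A.DefinableFun L f) : A.Definable L {v | f v ∈ S} :=
  hS.preimage_map (F := fun v => ![f v]) fun i => by fin_cases i; simpa

theorem definable_setOf_iff {s t : Set (α → M)} (hs : A.Definable L s) (ht : A.Definable L t) :
    A.Definable L {v | v ∈ s ↔ v ∈ t} := by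
  convert (hs.himp ht).inter (ht.himp hs) using 1
  ext
  simp only [mem_ofPred_eq, mem_inter_iff, himp_eq, sup_eq_union, mem_union, mem_compl_iff]
  tauto

theorem definable_setOf_mem_biUnion {ι : Type*} {s : Set ι} (hs : s.Finite) {N : ι → Set M}
    (h : ∀ i ∈ s, A.Definable L {p : Fin 1 → M | p 0 ∈ N i}) :
    A.Definable L {p : Fin 1 → M | p 0 ∈ ⋃ i ∈ s, N i} := by
  have := hs.to_subtype
  convert definable_iUnion_of_finite (ι := s) fun i => h i i.2 using 1
  ext
  simp

theorem definable_setOf_lt [LinearOrder M] (hlt : A.Definable L {p : Fin 2 → M | p 0 < p 1})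
    {f g : (α → M) → M} (hf : A.DefinableFun L f) (hg : A.DefinableFun L g) :
    A.Definable L {v | f v < g v} :=
  hlt.preimage_map (F := fun v => ![f v, g v]) fun i => by fin_cases i <;> simpa

variable [AddCommGroup M]

theorem definableFun_add (hadd : A.DefinableFun L fun p : Fin 2 → M => p 0 + p 1)
    {f g : (α → M) → M} (hf : A.DefinableFun L f) (hg : A.DefinableFun L g) :
    A.DefinableFun L fun v => f v + g v := by
  simpa using hadd.comp (g := fun v => ![f v, g v]) fun i => by fin_cases i <;> simpa

theorem definableFun_sub (hadd : A.DefinableFun L fun p : Fin 2 → M => p 0 + p 1)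
    (hneg : A.DefinableFun L fun p : Fin 1 → M => -p 0) {f g : (α → M) → M}
    (hf : A.DefinableFun L f) (hg : A.DefinableFun L g) : A.DefinableFun L fun v => f v - g v := by
  have hng : A.DefinableFun L fun v => -g v :=
    hneg.comp (g := fun v => ![g v]) fun i => by fin_cases i; simpa
  simpa [sub_eq_add_neg] using hadd.comp (g := fun v => ![f v, -g v]) fun i => by
    fin_cases i <;> simpa

theorem definable_setOf_mem_preimage_mkQ {F : Type*} [Ring F] [Module F M] {Q : Submodule F M}
    (hadd : (univ : Set M).DefinableFun L fun p : Fin 2 → M => p 0 + p 1)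
    (hneg : (univ : Set M).DefinableFun L fun p : Fin 1 → M => -p 0)
    (hQ : (univ : Set M).Definable L {p : Fin 1 → M | p 0 ∈ Q}) {T : Set (M ⧸ Q)}
    (hT : T.Finite ∨ Tᶜ.Finite) :
    (univ : Set M).Definable L {p : Fin 1 → M | p 0 ∈ Q.mkQ ⁻¹' T} := by
  have hfin {T : Set (M ⧸ Q)} (hT : T.Finite) :
      (univ : Set M).Definable L {p : Fin 1 → M | p 0 ∈ Q.mkQ ⁻¹' T} := by
    let r := Function.surjInv Q.mkQ_surjective
    convert definable_setOf_mem_biUnion hT (N := fun z => {x | x - r z ∈ Q}) fun z _ =>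
      definable_setOf_mem hQ (definableFun_sub hadd hneg (.proj L)
        (L.definableFun_const _ (mem_univ (r z)))) using 1
    ext p
    simp only [mem_ofPred_eq, mem_preimage, mem_iUnion, exists_prop]
    constructor
    · exact fun h => ⟨_, h, (Submodule.Quotient.eq Q).1 (Function.surjInv_eq _ _).symm⟩
    · rintro ⟨z, hz, hpz⟩
      have : Q.mkQ (p 0) = z :=
        ((Submodule.Quotient.eq Q).2 hpz).trans (Function.surjInv_eq Q.mkQ_surjective z)
      exact this ▸ hz
  rcases hT with hT | hT
  · exact hfin hT
  · convert (hfin hT).compl using 1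
    ext
    simp

theorem definable_nearOpenPartWith [LinearOrder M] [IsOrderedAddMonoid M]
    (hlt : A.Definable L {p : Fin 2 → M | p 0 < p 1})
    (hadd : A.DefinableFun L fun p : Fin 2 → M => p 0 + p 1)
    (hneg : A.DefinableFun L fun p : Fin 1 → M => -p 0) {D S : Set M}
    (hD : A.Definable L {p : Fin 1 → M | p 0 ∈ D}) (hS : A.Definable L {p : Fin 1 → M | p 0 ∈ S}) :
    A.Definable L {p : Fin 1 → M | p 0 ∈ nearOpenPartWith D S} := by
  -- coordinates: `x`, then `ε, a, b`, then the point `y` of the window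
  have hW : A.Definable L {z : (Fin 1 ⊕ Fin 3) ⊕ Fin 1 → M |
      z (.inl (.inl 0)) - z (.inl (.inr 0)) < z (.inr 0) ∧
      z (.inr 0) < z (.inl (.inl 0)) + z (.inl (.inr 0)) ∧ z (.inr 0) ∈ S} :=
    (definable_setOf_lt hlt (definableFun_sub hadd hneg (.proj L) (.proj L)) (.proj L)).inter
      ((definable_setOf_lt hlt (.proj L) (definableFun_add hadd (.proj L) (.proj L))).inter
        (definable_setOf_mem hS (.proj L)))
  have hI : A.Definable L {z : (Fin 1 ⊕ Fin 3) ⊕ Fin 1 → M |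
      z (.inl (.inr 1)) < z (.inr 0) ∧ z (.inr 0) < z (.inl (.inr 2)) ∧ z (.inr 0) ∈ D} :=
    (definable_setOf_lt hlt (.proj L) (.proj L)).inter
      ((definable_setOf_lt hlt (.proj L) (.proj L)).inter (definable_setOf_mem hD (.proj L)))
  have hε : A.Definable L {w : Fin 1 ⊕ Fin 3 → M | w (.inl 0) - w (.inr 0) < w (.inl 0)} :=
    definable_setOf_lt hlt (definableFun_sub hadd hneg (.proj L) (.proj L)) (.proj L)
  convert (hε.inter (hW.exists_of_finite.inter
    (definable_setOf_iff hW hI).forall_of_finite)).exists_of_finite using 1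
  ext v
  simp [nearOpenPartWith, Fin.exists_fin_succ_pi, Set.ext_iff, Set.Nonempty, Fin.forall_fin_succ_pi,
    and_assoc]

end Definability

section LPStruc

variable {F M : Type} [Field F] [AddCommGroup M] [LinearOrder M] [Module F M] (one : M)
  (Q : Set M)

theorem lpStruc_definable_lt :
    letI := LPStruc F M one Q
    (univ : Set M).Definable (LP F) {p : Fin 2 → M | p 0 < p 1} := by
  let _ := LPStruc F M one Q
  refine (empty_definable_iff.2
    ⟨Relations.formula₂ (L := LP F) LPRel.lt (.var 0) (.var 1), ?_⟩).mono (empty_subset _)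
  ext
  rfl

theorem lpStruc_definable_mem :
    letI := LPStruc F M one Q
    (univ : Set M).Definable (LP F) {p : Fin 1 → M | p 0 ∈ Q} := by
  let _ := LPStruc F M one Q
  refine (empty_definable_iff.2
    ⟨Relations.formula₁ (L := LP F) LPRel.q (.var 0), ?_⟩).mono (empty_subset _)
  ext
  rfl

theorem lpStruc_definableFun_add :
    letI := LPStruc F M one Q
    (univ : Set M).DefinableFun (LP F) fun p : Fin 2 → M => p 0 + p 1 := by
  let _ := LPStruc F M one Q
  exact (DefinableFun.fun_symbol (L := LP F) LPFunc.add).of_empty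

theorem lpStruc_definableFun_neg :
    letI := LPStruc F M one Q
    (univ : Set M).DefinableFun (LP F) fun p : Fin 1 → M => -p 0 := by
  let _ := LPStruc F M one Q
  exact (DefinableFun.fun_symbol (L := LP F) LPFunc.neg).of_empty

end LPStruc

end POVS

open POVS in
theorem statement1
    (hsmul : ∀ (c : F) (x : M), 0 < c → 0 < x → 0 < c • x)
    (one : M)
    (Q : Submodule F M) (hQproper : (Q : Set M) ≠ Set.univ)
    (hQdense : ∀ a b : M, a < b → ∃ q ∈ Q, a < q ∧ q < b)
    (S : Set M) (hS : POVSDefinable1 F M one (Q : Set M) S) :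
    POVSDefinable1 F M one (Q : Set M) (nearOpenPart M (Q : Set M) S) ∧
    POVSDefinable1 F M one (Q : Set M) (S ∩ nearOpenPart M (Q : Set M) S) ∧
    POVSDefinable1 F M one (Q : Set M) (S \ nearOpenPart M (Q : Set M) S) := by
  have : PosSMulStrictMono F M :=
    ⟨fun c hc x y hxy => by simpa [smul_sub] using hsmul c (y - x) hc (sub_pos.2 hxy)⟩
  have hQ₁ : Q ≠ ⊤ := fun h => hQproper (by simp [h])
  have hSpc : IsPiecewiseCoset Q S :=
    IsPiecewiseCoset.of_qfDef (QFDef.of_povsDefinable hQ₁ hQdense hS)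
  obtain ⟨𝒯, h𝒯, hT, hNO⟩ := hSpc.nearOpenPart_eq_biUnion hQdense
  let _ := LPStruc F M one Q
  have hadd := lpStruc_definableFun_add (F := F) one (Q : Set M)
  have hneg := lpStruc_definableFun_neg (F := F) one (Q : Set M)
  have hNOdef : POVSDefinable1 F M one Q (nearOpenPart M Q S) := by
    rw [hNO]
    exact definable_setOf_mem_biUnion h𝒯 fun T hT𝒯 =>
      definable_nearOpenPartWith (lpStruc_definable_lt one Q) hadd hneg
        (definable_setOf_mem_preimage_mkQ hadd hneg (lpStruc_definable_mem one Q) (hT T hT𝒯)) hS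
  exact ⟨hNOdef, hS.inter hNOdef, hS.sdiff hNOdef⟩
end

section
/- Every definable subset of Mⁿ is a finite Boolean combination of sets of the following three forms, where t(x) = α₁x₁ + ⋯ + αₙxₙ + b ranges over affine functions with α₁,…,αₙ ∈ F and b ∈ M: {x ∈ Mⁿ : t(x) = 0}, {x ∈ Mⁿ : t(x) > 0}, and {x ∈ Mⁿ : t(x) ∈ Q}. (This is the one-sorted content of the quantifier elimination theorem for the two-sorted theory T_POVS of the pair together with its quotient F-vector space M/Q.) -/
open FirstOrder Language Set

variable (F M : Type) [Field F] [LinearOrder F] [IsStrictOrderedRing F] [AddCommGroup M] [LinearOrder M] [IsOrderedAddMonoid M] [Module F M]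

/-- Finite Boolean combinations of sets from a family `B`. -/
inductive BoolComb {α : Type} (B : Set (Set α)) : Set α → Prop
  | basic {s : Set α} : s ∈ B → BoolComb B s
  | univ : BoolComb B Set.univ
  | compl {s : Set α} : BoolComb B s → BoolComb B sᶜ
  | inter {s t : Set α} : BoolComb B s → BoolComb B t → BoolComb B (s ∩ t)


/-!
Quantifier elimination, one existential quantifier at a time. A set in the Boolean algebra
generated by the atoms is a finite union of conjunctions of literals `t x = 0`, `0 < t x`,
`t x ∈ Q`, `t x ∉ Q` with `t` affine (the complement of `t x = 0` or of `0 < t x` splits into two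
strict literals), so it suffices to eliminate `∃ y` from one conjunction of literals
`t x + a • y ◇ 0`. Solving the literals with `a ≠ 0` for `y` gives `y = r`, `r < y`, `y < r`,
`y - r ∈ Q` or `y - r ∉ Q` with `r` affine in `x`. An equation determines `y`, which is then
substituted. A membership `y - r₀ ∈ Q` confines `y` to the coset `r₀ + Q`, on which every other
`∈ Q` / `∉ Q` literal becomes the condition `r₀ - r ∈ Q` / `∉ Q` on `x`. Otherwise the `∉ Q`
literals only exclude finitely many cosets of `Q`, and these cannot cover an interval because `Q`
is a proper dense subspace. In the last two cases `y` ranges over a dense set, and strict bounds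
`lᵢ < y < uⱼ` are satisfiable there iff `lᵢ < uⱼ` for all `i, j` (Fourier–Motzkin). Terms of
`L_P` denote affine functions, so induction on formulas finishes the proof.
-/

open MeasureTheory

section Affine

variable {R A ι : Type*} [Ring R] [AddCommGroup A] [Module R A] [Fintype ι]

variable (R) in
/-- Only affine maps with coefficients in `R` are allowed: an `R`-linear map `A → A` need not be
multiplication by a scalar. -/
def IsAffine (t : (ι → A) → A) : Prop :=
  ∃ (c : ι → R) (b : A), ∀ x, t x = ∑ i, c i • x i + b

namespace IsAffine

variable {t s : (ι → A) → A}

theorem const (b : A) : IsAffine R (fun _ : ι → A => b) :=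
  ⟨0, b, fun x => by simp⟩

theorem apply [DecidableEq ι] (i : ι) : IsAffine R (fun x : ι → A => x i) :=
  ⟨Pi.single i 1, 0, fun x => by simp [Pi.single_apply, ite_smul]⟩

theorem add (ht : IsAffine R t) (hs : IsAffine R s) : IsAffine R (fun x => t x + s x) := by
  obtain ⟨c, b, ht⟩ := ht
  obtain ⟨c', b', hs⟩ := hs
  exact ⟨c + c', b + b', fun x => by
    simp only [ht, hs, Pi.add_apply, add_smul, Finset.sum_add_distrib]; abel⟩

theorem smul (ht : IsAffine R t) (r : R) : IsAffine R (fun x => r • t x) := by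
  obtain ⟨c, b, ht⟩ := ht
  exact ⟨r • c, r • b, fun x => by simp [ht, Finset.smul_sum, mul_smul]⟩

theorem neg (ht : IsAffine R t) : IsAffine R (fun x => -t x) := by
  simpa using ht.smul (-1)

theorem sub (ht : IsAffine R t) (hs : IsAffine R s) : IsAffine R (fun x => t x - s x) := by
  simpa [sub_eq_add_neg] using ht.add hs.neg

theorem comp_sumElim {κ : Type*} [Fintype κ] {t : (ι ⊕ κ → A) → A} (ht : IsAffine R t)
    (c : κ → A) : IsAffine R fun x : ι → A => t (Sum.elim x c) := by
  obtain ⟨a, b, ht⟩ := ht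
  exact ⟨a ∘ .inl, ∑ j, a (.inr j) • c j + b, fun x => by
    simp [ht, Fintype.sum_sum_type, add_assoc]⟩

theorem exists_comp_sumElim_snoc {m : ℕ} {t : (ι ⊕ Fin (m + 1) → A) → A} (ht : IsAffine R t) :
    ∃ (t' : (ι ⊕ Fin m → A) → A) (a : R), IsAffine R t' ∧
      ∀ x y, t (Sum.elim (x ∘ .inl) (Fin.snoc (x ∘ .inr) y)) = t' x + a • y := by
  obtain ⟨c, b, ht⟩ := ht
  refine ⟨_, c (.inr (Fin.last m)),
    ⟨Sum.elim (c ∘ .inl) (fun j => c (.inr j.castSucc)), b, fun _ => rfl⟩, fun x y => ?_⟩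
  simp only [ht, Fintype.sum_sum_type, Sum.elim_inl, Function.comp_apply, Sum.elim_inr,
    Fin.sum_univ_castSucc, Fin.snoc_castSucc, Fin.snoc_last]
  abel

end IsAffine

end Affine

theorem add_smul_eq_smul_sub {K V : Type*} [DivisionRing K] [AddCommGroup V] [Module K V]
    {a : K} (ha : a ≠ 0) (t y : V) : t + a • y = a • (y - -(a⁻¹ • t)) := by
  rw [sub_neg_eq_add, smul_add, smul_inv_smul₀ ha, add_comm]

namespace MeasureTheory.IsSetAlgebra

variable {α ι : Type*} {𝒜 : Set (Set α)}

theorem iInter_mem [Finite ι] (h𝒜 : IsSetAlgebra 𝒜) {s : ι → Set α} (hs : ∀ i, s i ∈ 𝒜) :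
    ⋂ i, s i ∈ 𝒜 := by
  have := Fintype.ofFinite ι
  simpa using h𝒜.biInter_mem Finset.univ fun i _ => hs i

theorem iUnion_mem [Finite ι] (h𝒜 : IsSetAlgebra 𝒜) {s : ι → Set α} (hs : ∀ i, s i ∈ 𝒜) :
    ⋃ i, s i ∈ 𝒜 := by
  have := Fintype.ofFinite ι
  simpa using h𝒜.biUnion_mem Finset.univ fun i _ => hs i

end MeasureTheory.IsSetAlgebra

theorem BoolComb.of_mem_generateSetAlgebra {α : Type} {B : Set (Set α)} {s : Set α}
    (hs : s ∈ generateSetAlgebra B) : BoolComb B s := by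
  induction hs with
  | base s hs => exact .basic hs
  | empty => simpa using BoolComb.univ.compl
  | compl s _ ih => exact ih.compl
  | union s t _ _ ihs iht => simpa [compl_inter] using (ihs.compl.inter iht.compl).compl

section IsOrderDense

variable {α : Type*} [LinearOrder α]

def IsOrderDense (D : Set α) : Prop :=
  ∀ a b, a < b → ∃ y ∈ D, a < y ∧ y < b

theorem IsOrderDense.exists_between_iff [NoMaxOrder α] [NoMinOrder α] [Nonempty α] {D : Set α}
    (hD : IsOrderDense D) {I J : Type*} [Finite I] [Finite J] (l : I → α) (u : J → α) :
    (∃ y ∈ D, (∀ i, l i < y) ∧ ∀ j, y < u j) ↔ ∀ i j, l i < u j := by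
  refine ⟨fun ⟨y, _, hl, hu⟩ i j => (hl i).trans (hu j), fun h => ?_⟩
  have : DenselyOrdered α := ⟨fun a b hab => (hD a b hab).imp fun _ h => h.2⟩
  obtain ⟨a, hla, hau⟩ := (finite_range l).exists_between' (finite_range u) (by simpa using h)
  obtain ⟨b, hab, hbu⟩ :=
    (finite_singleton a).exists_between' (finite_range u) (by simpa using hau)
  obtain ⟨y, hyD, hay, hyb⟩ := hD a b (hab a rfl)
  exact ⟨y, hyD, fun i => (hla _ ⟨i, rfl⟩).trans hay, fun j => hyb.trans (hbu _ ⟨j, rfl⟩)⟩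

end IsOrderDense

section Literals

variable {F M ι : Type*} [Field F] [AddCommGroup M] [LinearOrder M] [Module F M] [Fintype ι]
  (Q : Submodule F M)

def affineAtoms (ι : Type*) [Fintype ι] : Set (Set (ι → M)) :=
  {T | ∃ (c : ι → F) (b : M),
    T = {x | (∑ i, c i • x i) + b = 0} ∨
    T = {x | 0 < (∑ i, c i • x i) + b} ∨
    T = {x | (∑ i, c i • x i) + b ∈ Q}}

inductive LitKind
  | zero | pos | mem | nmem

def LitKind.Holds : LitKind → M → Prop
  | zero, z => z = 0
  | pos, z => 0 < z
  | mem, z => z ∈ Q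
  | nmem, z => z ∉ Q

def IsLiteral (s : Set (ι → M)) : Prop :=
  ∃ (k : LitKind) (t : (ι → M) → M), IsAffine F t ∧ s = {x | k.Holds Q (t x)}

variable {Q}

theorem setOf_holds_mem_generateSetAlgebra (k : LitKind) {t : (ι → M) → M} (ht : IsAffine F t) :
    {x | k.Holds Q (t x)} ∈ generateSetAlgebra (affineAtoms Q ι) := by
  obtain ⟨c, b, ht⟩ := ht
  simp only [funext ht]
  cases k with
  | zero => exact .base _ ⟨c, b, .inl rfl⟩
  | pos => exact .base _ ⟨c, b, .inr (.inl rfl)⟩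
  | mem => exact .base _ ⟨c, b, .inr (.inr rfl)⟩
  | nmem => exact .compl _ (.base _ ⟨c, b, .inr (.inr rfl)⟩)

theorem IsLiteral.of_mem_affineAtoms {s : Set (ι → M)} (hs : s ∈ affineAtoms Q ι) :
    IsLiteral Q s := by
  obtain ⟨c, b, rfl | rfl | rfl⟩ := hs
  exacts [⟨.zero, _, ⟨c, b, fun _ => rfl⟩, rfl⟩, ⟨.pos, _, ⟨c, b, fun _ => rfl⟩, rfl⟩,
    ⟨.mem, _, ⟨c, b, fun _ => rfl⟩, rfl⟩]

theorem preimage_mem_generateSetAlgebra {κ : Type*} [Fintype κ] {f : (ι → M) → κ → M}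
    (hf : ∀ t : (κ → M) → M, IsAffine F t → IsAffine F (t ∘ f)) {s : Set (κ → M)}
    (hs : s ∈ generateSetAlgebra (affineAtoms Q κ)) :
    f ⁻¹' s ∈ generateSetAlgebra (affineAtoms Q ι) := by
  induction hs with
  | base s hs =>
    obtain ⟨k, t, ht, rfl⟩ := IsLiteral.of_mem_affineAtoms hs
    exact setOf_holds_mem_generateSetAlgebra k (hf t ht)
  | empty => exact isSetAlgebra_generateSetAlgebra.empty_mem
  | compl s _ ih => exact isSetAlgebra_generateSetAlgebra.compl_mem ih
  | union s t _ _ ihs iht => exact isSetAlgebra_generateSetAlgebra.union_mem ihs iht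

theorem LitKind.holds_smul_iff {k : LitKind} (hk : k ≠ .pos) {a : F} (ha : a ≠ 0) (z : M) :
    k.Holds Q (a • z) ↔ k.Holds Q z := by
  cases k with
  | zero => exact smul_eq_zero.trans (or_iff_right ha)
  | pos => exact absurd rfl hk
  | mem => exact Q.smul_mem_iff ha
  | nmem => exact not_congr (Q.smul_mem_iff ha)

theorem LitKind.holds_add_smul_iff {k : LitKind} (hk : k ≠ .pos) {a : F} (ha : a ≠ 0) (t y : M) :
    k.Holds Q (t + a • y) ↔ k.Holds Q (y - -(a⁻¹ • t)) := by
  rw [add_smul_eq_smul_sub ha, holds_smul_iff hk ha]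

theorem LitKind.holds_add_iff {k : LitKind} (hk : k = .mem ∨ k = .nmem) {w : M} (hw : w ∈ Q)
    (z : M) : k.Holds Q (z + w) ↔ k.Holds Q z := by
  rcases hk with rfl | rfl
  exacts [Q.add_mem_iff_left hw, not_congr (Q.add_mem_iff_left hw)]

theorem setOf_exists_forall_holds_mem_generateSetAlgebra_of_eq {J : Type*} [Finite J]
    (k : J → LitKind) {t : J → (ι → M) → M} (ht : ∀ j, IsAffine F (t j)) (a : J → F) {j₀ : J}
    (hj₀ : k j₀ = .zero) (ha : a j₀ ≠ 0) :
    {x | ∃ y, ∀ j, (k j).Holds Q (t j x + a j • y)} ∈ generateSetAlgebra (affineAtoms Q ι) := by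
  set r₀ : (ι → M) → M := fun x => -((a j₀)⁻¹ • t j₀ x)
  have : {x | ∃ y, ∀ j, (k j).Holds Q (t j x + a j • y)} =
      ⋂ j, {x | (k j).Holds Q (t j x + a j • r₀ x)} := by
    ext x
    simp only [mem_iInter, mem_ofPred_eq]
    refine ⟨fun ⟨y, hy⟩ => ?_, fun h => ⟨_, h⟩⟩
    have := (LitKind.holds_add_smul_iff (by simp [hj₀]) ha _ y).1 (hy j₀)
    rw [hj₀] at this
    exact (sub_eq_zero.1 this : y = r₀ x) ▸ hy
  rw [this]
  exact isSetAlgebra_generateSetAlgebra.iInter_mem fun j =>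
    setOf_holds_mem_generateSetAlgebra _ ((ht j).add (((ht j₀).smul _).neg.smul (a j)))

variable [IsOrderedAddMonoid M]

theorem exists_isLiteral_of_mem_or_compl_mem {s : Set (ι → M)}
    (hs : s ∈ affineAtoms Q ι ∨ sᶜ ∈ affineAtoms Q ι) :
    ∃ L : Bool → Set (ι → M), (∀ b, IsLiteral Q (L b)) ∧ s = ⋃ b, L b := by
  rcases hs with hs | hs
  · exact ⟨fun _ => s, fun _ => .of_mem_affineAtoms hs, (iUnion_const s).symm⟩
  obtain ⟨c, b, h⟩ := hs
  set t : (ι → M) → M := fun x => ∑ i, c i • x i + b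
  have ht : IsAffine F t := ⟨c, b, fun _ => rfl⟩
  rcases h with h | h | h <;> rw [compl_eq_comm] at h <;> subst h
  · refine ⟨fun b => cond b {x | 0 < t x} {x | 0 < -t x}, ?_, ?_⟩
    · rintro (_ | _)
      exacts [⟨.pos, _, ht.neg, rfl⟩, ⟨.pos, _, ht, rfl⟩]
    · rw [← union_eq_iUnion]
      ext x
      simp only [mem_compl_iff, mem_union, mem_ofPred_eq, neg_pos]
      exact ne_iff_lt_or_gt.trans or_comm
  · refine ⟨fun b => cond b {x | t x = 0} {x | 0 < -t x}, ?_, ?_⟩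
    · rintro (_ | _)
      exacts [⟨.pos, _, ht.neg, rfl⟩, ⟨.zero, _, ht, rfl⟩]
    · rw [← union_eq_iUnion]
      ext x
      simp only [mem_compl_iff, mem_union, mem_ofPred_eq, not_lt, neg_pos]
      exact le_iff_eq_or_lt
  · exact ⟨fun _ => {x | t x ∉ Q}, fun _ => ⟨.nmem, t, ht, rfl⟩, (iUnion_const _).symm⟩

theorem IsOrderDense.setOf_sub_mem (hQ : IsOrderDense (Q : Set M)) (c : M) :
    IsOrderDense {y | y - c ∈ Q} := by
  intro a b hab
  obtain ⟨q, hq, haq, hqb⟩ := hQ (a - c) (b - c) (sub_lt_sub_right hab c)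
  exact ⟨q + c, by simpa using hq, sub_lt_iff_lt_add.1 haq, lt_sub_iff_add_lt.1 hqb⟩

end Literals

section OrderedVectorSpace

variable {F M ι : Type*} [Field F] [LinearOrder F] [IsStrictOrderedRing F]
  [AddCommGroup M] [LinearOrder M] [IsOrderedAddMonoid M] [Module F M] [Fintype ι]
  {Q : Submodule F M}

/-- If the cosets covered an interval, translating by elements of `Q` would make them cover `M`,
and two of the multiples `n • v` of some `v ∉ Q` would lie in the same coset. -/
theorem IsOrderDense.setOf_forall_sub_notMem (hQ : IsOrderDense (Q : Set M))
    (hQ' : (Q : Set M) ≠ univ) {J : Type*} [Finite J] (c : J → M) :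
    IsOrderDense {y | ∀ j, y - c j ∉ Q} := by
  intro a b hab
  by_contra! hab'
  have hcover : ∀ z : M, ∃ j, z - c j ∈ Q := by
    intro z
    obtain ⟨q, hq, haq, hqb⟩ := hQ (a - z) (b - z) (sub_lt_sub_right hab z)
    by_contra! hz
    refine (hab' (z + q) (fun j hj => hz j ?_) (sub_lt_iff_lt_add'.1 haq)).not_gt
      (lt_sub_iff_add_lt'.1 hqb)
    simpa [add_sub_right_comm] using Q.sub_mem hj hq
  obtain ⟨v, hv⟩ := (ne_univ_iff_exists_notMem _).1 hQ'
  choose f hf using fun n : ℕ => hcover ((n : F) • v)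
  obtain ⟨m, n, hmn, hfmn⟩ := Finite.exists_ne_map_eq_of_infinite f
  have : ((m : F) - n) • v ∈ Q := by simpa [sub_smul, hfmn] using Q.sub_mem (hf m) (hf n)
  exact hv ((Q.smul_mem_iff (sub_ne_zero.2 (Nat.cast_injective.ne hmn))).1 this)

variable [PosSMulStrictMono F M]

omit [IsStrictOrderedRing F] in
theorem pos_add_smul_iff_of_pos {a : F} (ha : 0 < a) (t y : M) :
    0 < t + a • y ↔ -(a⁻¹ • t) < y := by
  rw [add_smul_eq_smul_sub ha.ne', smul_pos_iff_of_pos_left ha, sub_pos]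

theorem pos_add_smul_iff_of_neg {a : F} (ha : a < 0) (t y : M) :
    0 < t + a • y ↔ y < -(a⁻¹ • t) := by
  rw [add_smul_eq_smul_sub ha.ne, smul_pos_iff_of_neg_left ha, sub_neg]

variable [Nontrivial M]

theorem setOf_exists_mem_forall_pos_mem_generateSetAlgebra {J : Type*} [Finite J]
    {t : J → (ι → M) → M} (ht : ∀ j, IsAffine F (t j)) {a : J → F} (ha : ∀ j, a j ≠ 0)
    {D : (ι → M) → Set M} (hD : ∀ x, IsOrderDense (D x)) :
    {x | ∃ y ∈ D x, ∀ j, 0 < t j x + a j • y} ∈ generateSetAlgebra (affineAtoms Q ι) := by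
  set r : J → (ι → M) → M := fun j x => -((a j)⁻¹ • t j x)
  have hr (j : J) : IsAffine F (r j) := ((ht j).smul _).neg
  have key (x : ι → M) (y : M) : (∀ j, 0 < t j x + a j • y) ↔
      (∀ i : {i // 0 < a i}, r i x < y) ∧ ∀ j : {j // a j < 0}, y < r j x := by
    refine ⟨fun h => ⟨fun i => (pos_add_smul_iff_of_pos i.2 _ _).1 (h i),
      fun j => (pos_add_smul_iff_of_neg j.2 _ _).1 (h j)⟩, fun ⟨hl, hu⟩ j => ?_⟩
    rcases (ha j).lt_or_gt with hj | hj
    exacts [(pos_add_smul_iff_of_neg hj _ _).2 (hu ⟨j, hj⟩),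
      (pos_add_smul_iff_of_pos hj _ _).2 (hl ⟨j, hj⟩)]
  have : {x | ∃ y ∈ D x, ∀ j, 0 < t j x + a j • y} =
      ⋂ (i : {i // 0 < a i}) (j : {j // a j < 0}), {x | 0 < r j x - r i x} := by
    ext x
    simp only [key, (hD x).exists_between_iff, mem_iInter, mem_ofPred_eq, sub_pos]
  rw [this]
  exact isSetAlgebra_generateSetAlgebra.iInter_mem fun i =>
    isSetAlgebra_generateSetAlgebra.iInter_mem fun j =>
      setOf_holds_mem_generateSetAlgebra .pos ((hr j).sub (hr i))

theorem setOf_exists_forall_holds_mem_generateSetAlgebra_of_iff {J : Type*} [Finite J]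
    (k : J → LitKind) {t : J → (ι → M) → M} (ht : ∀ j, IsAffine F (t j)) {a : J → F}
    (ha : ∀ j, a j ≠ 0) {N : Set (ι → M)} (hN : N ∈ generateSetAlgebra (affineAtoms Q ι))
    {D : (ι → M) → Set M} (hD : ∀ x, IsOrderDense (D x))
    (h : ∀ x y, (∀ j, (k j).Holds Q (t j x + a j • y)) ↔
      x ∈ N ∧ y ∈ D x ∧ ∀ j : {j // k j = .pos}, (k j).Holds Q (t j x + a j • y)) :
    {x | ∃ y, ∀ j, (k j).Holds Q (t j x + a j • y)} ∈ generateSetAlgebra (affineAtoms Q ι) := by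
  have hpos (j : {j // k j = .pos}) (z : M) : (k j).Holds Q z ↔ 0 < z := by rw [j.2]; rfl
  have : {x | ∃ y, ∀ j, (k j).Holds Q (t j x + a j • y)} =
      N ∩ {x | ∃ y ∈ D x, ∀ j : {j // k j = .pos}, 0 < t j x + a j • y} := by
    ext x
    simp only [h, hpos, mem_inter_iff, mem_ofPred_eq, exists_and_left]
  rw [this]
  exact isSetAlgebra_generateSetAlgebra.inter_mem hN
    (setOf_exists_mem_forall_pos_mem_generateSetAlgebra
      (fun j : {j // k j = .pos} => ht j) (fun j => ha j) hD)

theorem setOf_exists_forall_holds_mem_generateSetAlgebra_of_mem (hQ : IsOrderDense (Q : Set M))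
    {J : Type*} [Finite J] (k : J → LitKind) {t : J → (ι → M) → M} (ht : ∀ j, IsAffine F (t j))
    {a : J → F} (ha : ∀ j, a j ≠ 0) (hk : ∀ j, k j ≠ .zero) {j₀ : J} (hj₀ : k j₀ = .mem) :
    {x | ∃ y, ∀ j, (k j).Holds Q (t j x + a j • y)} ∈ generateSetAlgebra (affineAtoms Q ι) := by
  set r : J → (ι → M) → M := fun j x => -((a j)⁻¹ • t j x)
  refine setOf_exists_forall_holds_mem_generateSetAlgebra_of_iff k ht ha
    (N := ⋂ j : {j // k j ≠ .pos}, {x | (k j).Holds Q (r j₀ x - r j x)})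
    (isSetAlgebra_generateSetAlgebra.iInter_mem fun j => setOf_holds_mem_generateSetAlgebra _
      (((ht j₀).smul _).neg.sub ((ht j).smul _).neg))
    (fun x => hQ.setOf_sub_mem (r j₀ x)) fun x y => ?_
  have htransfer {j : J} (hj : k j ≠ .pos) (hy : y - r j₀ x ∈ Q) :
      (k j).Holds Q (t j x + a j • y) ↔ (k j).Holds Q (r j₀ x - r j x) := by
    have hk' : k j = .mem ∨ k j = .nmem := by
      have h₀ := hk j
      cases h : k j <;> simp_all
    rw [LitKind.holds_add_smul_iff hj (ha j), ← LitKind.holds_add_iff hk' hy (r j₀ x - r j x),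
      sub_add_sub_cancel']
  constructor
  · intro hy
    have hy₀ : y - r j₀ x ∈ Q := by
      have := (LitKind.holds_add_smul_iff (by simp [hj₀]) (ha j₀) _ y).1 (hy j₀)
      rwa [hj₀] at this
    exact ⟨mem_iInter.2 fun j => (htransfer j.2 hy₀).1 (hy j), hy₀, fun j => hy j⟩
  · rintro ⟨hN, hy₀, hpos⟩ j
    by_cases hj : k j = .pos
    · exact hpos ⟨j, hj⟩
    · exact (htransfer hj hy₀).2 (mem_iInter.1 hN ⟨j, hj⟩)

theorem setOf_exists_forall_holds_mem_generateSetAlgebra_of_pos_or_nmem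
    (hQ : IsOrderDense (Q : Set M)) (hQ' : (Q : Set M) ≠ univ) {J : Type*} [Finite J]
    (k : J → LitKind) {t : J → (ι → M) → M} (ht : ∀ j, IsAffine F (t j)) {a : J → F}
    (ha : ∀ j, a j ≠ 0) (hk : ∀ j, k j = .pos ∨ k j = .nmem) :
    {x | ∃ y, ∀ j, (k j).Holds Q (t j x + a j • y)} ∈ generateSetAlgebra (affineAtoms Q ι) := by
  refine setOf_exists_forall_holds_mem_generateSetAlgebra_of_iff k ht ha
    isSetAlgebra_generateSetAlgebra.univ_mem
    (fun x => hQ.setOf_forall_sub_notMem hQ'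
      fun j : {j // k j = .nmem} => -((a j)⁻¹ • t j x)) fun x y => ?_
  have hnmem (j : {j // k j = .nmem}) :
      (k j).Holds Q (t j x + a j • y) ↔ y - -((a j)⁻¹ • t j x) ∉ Q := by
    rw [LitKind.holds_add_smul_iff (by simp [j.2]) (ha j), j.2]; rfl
  refine ⟨fun hy => ⟨trivial, fun j => (hnmem j).1 (hy j), fun j => hy j⟩, ?_⟩
  rintro ⟨-, hD, hpos⟩ j
  by_cases hj : k j = .pos
  · exact hpos ⟨j, hj⟩
  · have hj' := (hk j).resolve_left hj
    exact (hnmem ⟨j, hj'⟩).2 (hD ⟨j, hj'⟩)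

theorem setOf_exists_forall_holds_mem_generateSetAlgebra_of_ne_zero
    (hQ : IsOrderDense (Q : Set M)) (hQ' : (Q : Set M) ≠ univ) {J : Type*} [Finite J]
    (k : J → LitKind) {t : J → (ι → M) → M} (ht : ∀ j, IsAffine F (t j)) {a : J → F}
    (ha : ∀ j, a j ≠ 0) :
    {x | ∃ y, ∀ j, (k j).Holds Q (t j x + a j • y)} ∈ generateSetAlgebra (affineAtoms Q ι) := by
  by_cases hzero : ∃ j₀, k j₀ = .zero
  · obtain ⟨j₀, hj₀⟩ := hzero
    exact setOf_exists_forall_holds_mem_generateSetAlgebra_of_eq k ht a hj₀ (ha j₀)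
  push Not at hzero
  by_cases hmem : ∃ j₀, k j₀ = .mem
  · obtain ⟨j₀, hj₀⟩ := hmem
    exact setOf_exists_forall_holds_mem_generateSetAlgebra_of_mem hQ k ht ha hzero hj₀
  push Not at hmem
  refine setOf_exists_forall_holds_mem_generateSetAlgebra_of_pos_or_nmem hQ hQ' k ht ha
    fun j => ?_
  have h₀ := hzero j
  have h₁ := hmem j
  cases h : k j <;> simp_all

theorem setOf_exists_forall_holds_mem_generateSetAlgebra (hQ : IsOrderDense (Q : Set M))
    (hQ' : (Q : Set M) ≠ univ) {J : Type*} [Finite J] (k : J → LitKind)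
    {t : J → (ι → M) → M} (ht : ∀ j, IsAffine F (t j)) (a : J → F) :
    {x | ∃ y, ∀ j, (k j).Holds Q (t j x + a j • y)} ∈ generateSetAlgebra (affineAtoms Q ι) := by
  have : {x | ∃ y, ∀ j, (k j).Holds Q (t j x + a j • y)} =
      (⋂ j : {j // a j = 0}, {x | (k j).Holds Q (t j x)}) ∩
        {x | ∃ y, ∀ j : {j // a j ≠ 0}, (k j).Holds Q (t j x + a j • y)} := by
    ext x
    simp only [mem_inter_iff, mem_iInter, mem_ofPred_eq, ← exists_and_left]
    refine exists_congr fun y => ⟨fun h => ⟨fun j => by simpa [j.2] using h j, fun j => h j⟩,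
      fun ⟨h₀, h₁⟩ j => ?_⟩
    by_cases hj : a j = 0
    · simpa [hj] using h₀ ⟨j, hj⟩
    · exact h₁ ⟨j, hj⟩
  rw [this]
  exact isSetAlgebra_generateSetAlgebra.inter_mem
    (isSetAlgebra_generateSetAlgebra.iInter_mem fun j =>
      setOf_holds_mem_generateSetAlgebra _ (ht j))
    (setOf_exists_forall_holds_mem_generateSetAlgebra_of_ne_zero hQ hQ'
      (fun j : {j // a j ≠ 0} => k j) (fun j => ht j) (fun j => j.2))

theorem setOf_exists_mem_iInter_mem_generateSetAlgebra (hQ : IsOrderDense (Q : Set M))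
    (hQ' : (Q : Set M) ≠ univ) {κ : Type*} [Fintype κ] {g : (ι → M) → M → κ → M}
    (hg : ∀ t : (κ → M) → M, IsAffine F t →
      ∃ (t' : (ι → M) → M) (a : F), IsAffine F t' ∧ ∀ x y, t (g x y) = t' x + a • y)
    {J : Type*} [Finite J] {L : J → Set (κ → M)} (hL : ∀ j, IsLiteral Q (L j)) :
    {x | ∃ y, g x y ∈ ⋂ j, L j} ∈ generateSetAlgebra (affineAtoms Q ι) := by
  choose k t ht hkt using hL
  choose t' a ht' htt' using fun j => hg (t j) (ht j)
  have : {x | ∃ y, g x y ∈ ⋂ j, L j} = {x | ∃ y, ∀ j, (k j).Holds Q (t' j x + a j • y)} := by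
    ext x
    simp only [mem_iInter, hkt, mem_ofPred_eq, htt']
  rw [this]
  exact setOf_exists_forall_holds_mem_generateSetAlgebra hQ hQ' k ht' a

theorem setOf_exists_mem_generateSetAlgebra (hQ : IsOrderDense (Q : Set M))
    (hQ' : (Q : Set M) ≠ univ) {κ : Type*} [Fintype κ] {g : (ι → M) → M → κ → M}
    (hg : ∀ t : (κ → M) → M, IsAffine F t →
      ∃ (t' : (ι → M) → M) (a : F), IsAffine F t' ∧ ∀ x y, t (g x y) = t' x + a • y)
    {s : Set (κ → M)} (hs : s ∈ generateSetAlgebra (affineAtoms Q κ)) :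
    {x | ∃ y, g x y ∈ s} ∈ generateSetAlgebra (affineAtoms Q ι) := by
  obtain ⟨A, hA, hAfin, hlit, rfl⟩ := mem_generateSetAlgebra_elim hs
  have := hA.to_subtype
  have (a : A) : Finite a.1 := (hAfin a a.2).to_subtype
  choose L hL hLeq using fun (a : A) (t : a.1) =>
    exists_isLiteral_of_mem_or_compl_mem (hlit a a.2 t t.2)
  have hdnf (a : A) : ⋂ t ∈ a.1, t = ⋃ f : a.1 → Bool, ⋂ t : a.1, L a t (f t) := by
    calc ⋂ t ∈ a.1, t = ⋂ t : a.1, ⋃ b, L a t b := by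
          rw [biInter_eq_iInter]; exact iInter_congr (hLeq a)
      _ = ⋃ f : a.1 → Bool, ⋂ t : a.1, L a t (f t) := by
          ext z; simp only [mem_iInter, mem_iUnion, Classical.skolem]
  have : {x | ∃ y, g x y ∈ ⋃ a ∈ A, ⋂ t ∈ a, t} =
      ⋃ (a : A) (f : a.1 → Bool), {x | ∃ y, g x y ∈ ⋂ t : a.1, L a t (f t)} := by
    simp_rw [biUnion_eq_iUnion, hdnf]
    ext x
    simp only [mem_iUnion, mem_ofPred_eq]
    exact ⟨fun ⟨y, a, f, h⟩ => ⟨a, f, y, h⟩, fun ⟨a, f, y, h⟩ => ⟨y, a, f, h⟩⟩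
  rw [this]
  exact isSetAlgebra_generateSetAlgebra.iUnion_mem fun a =>
    isSetAlgebra_generateSetAlgebra.iUnion_mem fun f =>
      setOf_exists_mem_iInter_mem_generateSetAlgebra hQ hQ' hg fun t => hL a t (f t)

end OrderedVectorSpace

section Formula

variable {F M} {β : Type} [Fintype β] (one : M)

omit [LinearOrder F] [IsStrictOrderedRing F] [IsOrderedAddMonoid M] in
theorem isAffine_realize_term (Q : Set M) (t : (LP F)[[(univ : Set M)]].Term β) :
    letI := LPStruc F M one Q
    IsAffine F fun w : β → M => t.realize w := by
  classical
  induction t with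
  | var i => exact IsAffine.apply i
  | @func l f ts ih =>
    rcases f with f | c
    · cases f with
      | add => exact (ih 0).add (ih 1)
      | neg => exact (ih 0).neg
      | zero => exact IsAffine.const 0
      | one => exact IsAffine.const one
      | smul c => exact (ih 0).smul c
    · rcases l with _ | l
      · exact IsAffine.const (c : M)
      · exact isEmptyElim c

theorem realize_mem_generateSetAlgebra [PosSMulStrictMono F M] [Nontrivial M]
    {Q : Submodule F M} (hQ : IsOrderDense (Q : Set M)) (hQ' : (Q : Set M) ≠ univ) {m : ℕ}
    (φ : (LP F)[[(univ : Set M)]].BoundedFormula β m) :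
    letI := LPStruc F M one (Q : Set M)
    {w : β ⊕ Fin m → M | φ.Realize (w ∘ Sum.inl) (w ∘ Sum.inr)} ∈
      generateSetAlgebra (affineAtoms Q (β ⊕ Fin m)) := by
  have hterm {m : ℕ} (t : (LP F)[[(univ : Set M)]].Term (β ⊕ Fin m)) :=
    isAffine_realize_term one (Q : Set M) t
  induction φ with
  | falsum => exact isSetAlgebra_generateSetAlgebra.empty_mem
  | equal t₁ t₂ =>
    convert setOf_holds_mem_generateSetAlgebra .zero ((hterm t₁).sub (hterm t₂)) using 2 with w
    simp [BoundedFormula.Realize, LitKind.Holds, sub_eq_zero]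
  | rel R ts =>
    rcases R with R | R
    · cases R with
      | lt =>
        convert setOf_holds_mem_generateSetAlgebra .pos ((hterm (ts 1)).sub (hterm (ts 0)))
          using 2 with w
        simp only [BoundedFormula.Realize, Sum.elim_comp_inl_inr, LitKind.Holds, sub_pos]
        rfl
      | q =>
        convert setOf_holds_mem_generateSetAlgebra .mem (hterm (ts 0)) using 2 with w
        simp only [BoundedFormula.Realize, Sum.elim_comp_inl_inr, LitKind.Holds]
        rfl
    · exact isEmptyElim R
  | imp φ ψ ihφ ihψ =>
    convert isSetAlgebra_generateSetAlgebra.union_mem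
      (isSetAlgebra_generateSetAlgebra.compl_mem ihφ) ihψ using 1
    ext w
    simp [imp_iff_not_or]
  | all φ ih =>
    convert isSetAlgebra_generateSetAlgebra.compl_mem (setOf_exists_mem_generateSetAlgebra hQ hQ'
      (fun t ht => ht.exists_comp_sumElim_snoc) (isSetAlgebra_generateSetAlgebra.compl_mem ih))
      using 1
    ext w
    simp

end Formula

theorem statement3
    (hsmul : ∀ (c : F) (x : M), 0 < c → 0 < x → 0 < c • x)
    (one : M) (hone : 0 < one)
    (Q : Submodule F M) (hQproper : (Q : Set M) ≠ Set.univ)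
    (hQdense : ∀ a b : M, a < b → ∃ q ∈ Q, a < q ∧ q < b)
    (n : ℕ) (S : Set (Fin n → M)) (hS : POVSDefinable F M one (Q : Set M) S) :
    BoolComb {T : Set (Fin n → M) | ∃ (c : Fin n → F) (b : M),
        T = {x | (∑ i, c i • x i) + b = 0} ∨
        T = {x | 0 < (∑ i, c i • x i) + b} ∨
        T = {x | (∑ i, c i • x i) + b ∈ Q}} S := by
  have : PosSMulStrictMono F M := ⟨fun c hc a b hab =>
    sub_pos.1 (by simpa [smul_sub] using hsmul c (b - a) hc (sub_pos.2 hab))⟩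
  have : Nontrivial M := nontrivial_of_ne one 0 hone.ne'
  obtain ⟨φ, rfl⟩ := hS
  exact .of_mem_generateSetAlgebra <| preimage_mem_generateSetAlgebra
    (fun t ht => ht.comp_sumElim default) (realize_mem_generateSetAlgebra one hQdense hQproper φ)
end

section
/- Every subset of Mⁿ definable with parameters in the expanded structure (M; +, −, 0, 1, <, (α·)_{α∈F}, Q, ≺′) is a finite Boolean combination of sets of the forms {x ∈ Mⁿ : t(x) = 0}, {x ∈ Mⁿ : t(x) > 0}, {x ∈ Mⁿ : t(x) ∈ Q}, and {x ∈ Mⁿ : t(x) ≺′ 0}, where t(x) = α₁x₁ + ⋯ + αₙxₙ + b ranges over affine functions with α₁,…,αₙ ∈ F and b ∈ M. (This is the one-sorted content of the quantifier elimination theorem for the distal two-sorted expansion of T_POVS by an order ⪯ on the quotient sort M/Q.) -/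
/-!
Terms define affine functions `x ↦ ∑ i, cᵢ • xᵢ + b`, so atomic formulas are sign conditions on an
affine `t` in `M` and on its class `t + Q` in the ordered quotient. It suffices to eliminate one
existential quantifier `∃ y` from a conjunction of such conditions (put the matrix in disjunctive
normal form). Solve each condition for `y`. If one of them is an equation `y = e(v)`, substitute.
Otherwise the conjunction says that `y` lies in an open interval `(max lᵢ, min uⱼ)` of `M` and that
`y + Q` lies in a set `J ⊆ M ⧸ Q` cut out by bounds and equations. Every coset of `Q` is dense in
`M`, so such a `y` exists iff `lᵢ < uⱼ` for all `i, j` and `J` is nonempty. If one of the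
conditions defining `J` is an equation `y + Q = c(v) + Q`, then `J` is nonempty iff `c(v) + Q`
satisfies the others; if not, as `M ⧸ Q` is a dense linear order without endpoints, iff each lower
bound of `J` is below each upper bound.
-/

open FirstOrder Language Set

variable (F M : Type) [Field F] [LinearOrder F] [IsStrictOrderedRing F] [AddCommGroup M] [LinearOrder M] [IsOrderedAddMonoid M] [Module F M]

/-- Relations of the expanded language: `<`, `Q`, and the new order `≺′`. -/
inductive LPRel' : ℕ → Type
  | lt : LPRel' 2
  | q : LPRel' 1
  | plt : LPRel' 2

/-- The expanded language `L_P ∪ {≺′}`. -/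
def LP' (F : Type) : Language := ⟨LPFunc F, LPRel'⟩

/-- The natural structure for the expanded language, where `x ≺′ y` iff
`x + Q ≺ y + Q` for a given relation `≺` on the quotient `M ⧸ Q`. -/
def LP'Struc (one : M) (Q : Submodule F M) (prec : (M ⧸ Q) → (M ⧸ Q) → Prop) :
    (LP' F).Structure M where
  funMap := fun {n} f x =>
    match n, f with
    | _, LPFunc.add => x 0 + x 1
    | _, LPFunc.neg => -(x 0)
    | _, LPFunc.zero => 0
    | _, LPFunc.one => one
    | _, LPFunc.smul c => c • x 0
  RelMap := fun {n} r x =>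
    match n, r with
    | _, LPRel'.lt => x 0 < x 1
    | _, LPRel'.q => x 0 ∈ Q
    | _, LPRel'.plt => prec (Submodule.Quotient.mk (x 0)) (Submodule.Quotient.mk (x 1))

namespace BoolComb

variable {α β : Type} {B B' : Set (Set α)} {s t : Set α}

theorem empty : BoolComb B (∅ : Set α) := by
  simpa using (univ : BoolComb B _).compl

theorem union (hs : BoolComb B s) (ht : BoolComb B t) : BoolComb B (s ∪ t) := by
  simpa [compl_inter] using (hs.compl.inter ht.compl).compl

theorem preimage {C : Set (Set β)} (f : β → α) (hB : ∀ u ∈ B, BoolComb C (f ⁻¹' u))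
    (hs : BoolComb B s) : BoolComb C (f ⁻¹' s) := by
  induction hs with
  | basic hu => exact hB _ hu
  | univ => exact univ
  | compl _ ih => exact ih.compl
  | inter _ _ ih₁ ih₂ => exact ih₁.inter ih₂

theorem mono (hB : ∀ u ∈ B, BoolComb B' u) (hs : BoolComb B s) : BoolComb B' s :=
  preimage id hB hs

theorem setOf_forall_mem {ι : Type*} (l : List ι) {P : ι → α → Prop}
    (h : ∀ i ∈ l, BoolComb B {x | P i x}) : BoolComb B {x | ∀ i ∈ l, P i x} := by
  induction l with
  | nil => simpa using (univ : BoolComb B _)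
  | cons i l ih =>
    simp only [List.forall_mem_cons, ofPred_and]
    exact (h i List.mem_cons_self).inter (ih fun j hj => h j (List.mem_cons_of_mem i hj))

end BoolComb

inductive IsCell {α : Type} (B : Set (Set α)) : Set α → Prop
  | univ : IsCell B univ
  | inter_of_mem {s t : Set α} : s ∈ B → IsCell B t → IsCell B (s ∩ t)

inductive IsDNF {α : Type} (B : Set (Set α)) : Set α → Prop
  | empty : IsDNF B ∅
  | union_of_isCell {s t : Set α} : IsCell B s → IsDNF B t → IsDNF B (s ∪ t)

section DNF

variable {α : Type} {B : Set (Set α)} {s t : Set α}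

theorem IsCell.inter (hs : IsCell B s) (ht : IsCell B t) : IsCell B (s ∩ t) := by
  induction hs with
  | univ => simpa using ht
  | inter_of_mem hu _ ih => simpa [inter_assoc] using IsCell.inter_of_mem hu ih

theorem IsCell.boolComb (hs : IsCell B s) : BoolComb B s := by
  induction hs with
  | univ => exact .univ
  | inter_of_mem hu _ ih => exact (BoolComb.basic hu).inter ih

theorem IsDNF.of_isCell (hs : IsCell B s) : IsDNF B s := by
  simpa using IsDNF.union_of_isCell hs .empty

theorem IsDNF.of_mem (hs : s ∈ B) : IsDNF B s := by
  simpa using of_isCell (.inter_of_mem hs .univ)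

theorem IsDNF.union (hs : IsDNF B s) (ht : IsDNF B t) : IsDNF B (s ∪ t) := by
  induction hs with
  | empty => simpa using ht
  | union_of_isCell hc _ ih => simpa [union_assoc] using IsDNF.union_of_isCell hc ih

theorem IsDNF.inter_isCell (hs : IsDNF B s) (ht : IsCell B t) : IsDNF B (s ∩ t) := by
  induction hs with
  | empty => simpa using IsDNF.empty
  | union_of_isCell hc _ ih =>
    simpa [union_inter_distrib_right] using IsDNF.union_of_isCell (hc.inter ht) ih

theorem IsDNF.inter (hs : IsDNF B s) (ht : IsDNF B t) : IsDNF B (s ∩ t) := by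
  induction ht with
  | empty => simpa using IsDNF.empty
  | union_of_isCell hc _ ih =>
    simpa [inter_union_distrib_left] using (hs.inter_isCell hc).union ih

variable (hB : ∀ u ∈ B, IsDNF B uᶜ)
include hB

theorem IsCell.isDNF_compl (hs : IsCell B s) : IsDNF B sᶜ := by
  induction hs with
  | univ => simpa using IsDNF.empty
  | inter_of_mem hu _ ih => simpa [compl_inter] using (hB _ hu).union ih

theorem IsDNF.compl (hs : IsDNF B s) : IsDNF B sᶜ := by
  induction hs with
  | empty => simpa using IsDNF.of_isCell IsCell.univ
  | union_of_isCell hc _ ih => simpa [compl_union] using (hc.isDNF_compl hB).inter ih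

theorem BoolComb.isDNF (hs : BoolComb B s) : IsDNF B s := by
  induction hs with
  | basic hu => exact .of_mem hu
  | univ => exact .of_isCell .univ
  | compl _ ih => exact ih.compl hB
  | inter _ _ ih₁ ih₂ => exact ih₁.inter ih₂

end DNF

theorem posSMulStrictMono_of_smul_pos {F W : Type*} [Ring F] [PartialOrder F] [AddCommGroup W]
    [PartialOrder W] [IsOrderedAddMonoid W] [Module F W]
    (h : ∀ (c : F) (w : W), 0 < c → 0 < w → 0 < c • w) : PosSMulStrictMono F W where
  smul_lt_smul_of_pos_left c hc u v huv := by
    simpa [smul_sub] using h c (v - u) hc (sub_pos.2 huv)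

theorem denselyOrdered_of_posSMulStrictMono (F : Type*) {W : Type*} [Field F] [LinearOrder F]
    [IsStrictOrderedRing F] [AddCommGroup W] [LinearOrder W] [IsOrderedAddMonoid W] [Module F W]
    [PosSMulStrictMono F W] : DenselyOrdered W where
  dense u v huv := by
    have hpos : 0 < (2⁻¹ : F) • (v - u) := smul_pos (by norm_num) (sub_pos.2 huv)
    have hmid : v - (u + (2⁻¹ : F) • (v - u)) = (2⁻¹ : F) • (v - u) := by module
    exact ⟨u + (2⁻¹ : F) • (v - u), lt_add_of_pos_right u hpos, sub_pos.1 (by rwa [hmid])⟩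

theorem smul_add_eq_zero_iff {F W : Type*} [DivisionRing F] [AddCommGroup W] [Module F W]
    {a : F} (w b : W) (ha : a ≠ 0) : a • w + b = 0 ↔ w = -a⁻¹ • b := by
  rw [add_eq_zero_iff_eq_neg, neg_smul, ← smul_neg, eq_inv_smul_iff₀ ha]

section OrderedModule

variable {F W : Type*} [Field F] [LinearOrder F] [IsStrictOrderedRing F]
  [AddCommGroup W] [LinearOrder W] [IsOrderedAddMonoid W] [Module F W] [PosSMulStrictMono F W]
  {a : F} (w b : W)

theorem pos_smul_add_iff_of_pos (ha : 0 < a) : 0 < a • w + b ↔ -a⁻¹ • b < w := by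
  rw [← neg_lt_iff_pos_add, ← smul_lt_smul_iff_of_pos_left (inv_pos.2 ha), inv_smul_smul₀ ha.ne',
    smul_neg, neg_smul]

theorem pos_smul_add_iff_of_neg (ha : a < 0) : 0 < a • w + b ↔ w < -a⁻¹ • b := by
  rw [← neg_smul_neg, pos_smul_add_iff_of_pos _ _ (neg_pos.2 ha), inv_neg, neg_neg, neg_smul,
    lt_neg]

end OrderedModule

section SignSets

variable {X W : Type*} [AddCommGroup W] [LinearOrder W] [IsOrderedAddMonoid W] (g : X → W)

theorem compl_setOf_eq_zero : {x | g x = 0}ᶜ = {x | 0 < g x} ∪ {x | 0 < -g x} := by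
  ext x
  simp only [mem_compl_iff, mem_ofPred_eq, mem_union, neg_pos, ← ne_eq]
  exact ne_iff_lt_or_gt.trans or_comm

theorem compl_setOf_pos : {x | 0 < g x}ᶜ = {x | g x = 0} ∪ {x | 0 < -g x} := by
  ext x
  simp only [mem_compl_iff, mem_ofPred_eq, mem_union, neg_pos]
  exact not_lt.trans le_iff_eq_or_lt

end SignSets

section AffineTerms

variable (F M : Type*) [Semiring F] [AddCommMonoid M] [Module F M] (ι : Type*) [Fintype ι]

/-- The functions defined by terms. Unlike `AffineMap`, the linear part may only multiply
coordinates by scalars from `F`. -/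
def affineTerms : Submodule F ((ι → M) → M) where
  carrier := {f | ∃ (c : ι → F) (b : M), ∀ x, f x = ∑ i, c i • x i + b}
  add_mem' := by
    rintro f g ⟨c, b, hf⟩ ⟨d, b', hg⟩
    refine ⟨c + d, b + b', fun x => ?_⟩
    simp only [Pi.add_apply, hf, hg, add_smul, Finset.sum_add_distrib]
    abel
  zero_mem' := ⟨0, 0, by simp⟩
  smul_mem' := by
    rintro a f ⟨c, b, hf⟩
    exact ⟨a • c, a • b, fun x => by simp [hf, smul_add, Finset.smul_sum, mul_smul]⟩

variable {F M ι}

namespace affineTerms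

theorem const_mem (b : M) : (fun _ => b) ∈ affineTerms F M ι := ⟨0, b, by simp⟩

theorem apply_mem (i : ι) : (fun x => x i) ∈ affineTerms F M ι := by
  classical
  exact ⟨Pi.single i 1, 0, fun x => by simp [Pi.single_apply, ite_smul]⟩

theorem comp_mem {κ : Type*} [Fintype κ] {f : (ι → M) → M} (hf : f ∈ affineTerms F M ι)
    {Φ : (κ → M) → ι → M} (hΦ : ∀ i, (fun z => Φ z i) ∈ affineTerms F M κ) :
    (fun z => f (Φ z)) ∈ affineTerms F M κ := by
  obtain ⟨c, b, hf⟩ := hf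
  have : (fun z => f (Φ z)) = ∑ i, c i • (fun z => Φ z i) + fun _ => b := by
    funext z; simp [hf, Finset.sum_apply]
  rw [this]
  exact add_mem (Submodule.sum_mem _ fun i _ => Submodule.smul_mem _ _ (hΦ i)) (const_mem b)

theorem comp_init_mem {k : ℕ} {f : (Fin k → M) → M} (hf : f ∈ affineTerms F M (Fin k)) :
    (fun x => f (Fin.init x)) ∈ affineTerms F M (Fin (k + 1)) :=
  comp_mem hf fun i => apply_mem i.castSucc

theorem exists_eq_smul_last_add {k : ℕ} {f : (Fin (k + 1) → M) → M}
    (hf : f ∈ affineTerms F M (Fin (k + 1))) :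
    ∃ a : F, ∃ g ∈ affineTerms F M (Fin k), ∀ x, f x = a • x (Fin.last k) + g (Fin.init x) := by
  obtain ⟨c, b, hf⟩ := hf
  refine ⟨c (Fin.last k), fun v => ∑ i, c i.castSucc • v i + b,
    ⟨fun i => c i.castSucc, b, fun v => rfl⟩, fun x => ?_⟩
  rw [hf, Fin.sum_univ_castSucc]
  simp only [Fin.init]
  abel

end affineTerms

end AffineTerms

section Atoms

variable {F M : Type} [Field F] [AddCommGroup M] [LinearOrder M] [Module F M]
  (Q : Submodule F M) [LinearOrder (M ⧸ Q)] {ι : Type} [Fintype ι]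

variable (ι) in
def signAtoms : Set (Set (ι → M)) :=
  {s | ∃ f ∈ affineTerms F M ι, s = {x | f x = 0} ∨ s = {x | 0 < f x} ∨
    s = {x | Q.mkQ (f x) = 0} ∨ s = {x | 0 < Q.mkQ (f x)}}

variable {Q} {f g : (ι → M) → M}

theorem boolComb_eq (hf : f ∈ affineTerms F M ι) (hg : g ∈ affineTerms F M ι) :
    BoolComb (signAtoms Q ι) {x | f x = g x} := by
  simpa [sub_eq_zero] using
    BoolComb.basic (B := signAtoms Q ι) ⟨f - g, sub_mem hf hg, Or.inl rfl⟩

theorem boolComb_lt [IsOrderedAddMonoid M] (hf : f ∈ affineTerms F M ι)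
    (hg : g ∈ affineTerms F M ι) :
    BoolComb (signAtoms Q ι) {x | f x < g x} := by
  simpa using BoolComb.basic (B := signAtoms Q ι) ⟨g - f, sub_mem hg hf, Or.inr (Or.inl rfl)⟩

theorem boolComb_mkQ_eq (hf : f ∈ affineTerms F M ι) (hg : g ∈ affineTerms F M ι) :
    BoolComb (signAtoms Q ι) {x | Q.mkQ (f x) = Q.mkQ (g x)} := by
  simpa [sub_eq_zero] using
    BoolComb.basic (B := signAtoms Q ι) ⟨f - g, sub_mem hf hg, Or.inr (Or.inr (Or.inl rfl))⟩

theorem boolComb_mkQ_lt [IsOrderedAddMonoid (M ⧸ Q)] (hf : f ∈ affineTerms F M ι)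
    (hg : g ∈ affineTerms F M ι) :
    BoolComb (signAtoms Q ι) {x | Q.mkQ (f x) < Q.mkQ (g x)} := by
  simpa using
    BoolComb.basic (B := signAtoms Q ι) ⟨g - f, sub_mem hg hf, Or.inr (Or.inr (Or.inr rfl))⟩

theorem isDNF_compl_of_mem_signAtoms [IsOrderedAddMonoid M] [IsOrderedAddMonoid (M ⧸ Q)]
    {s : Set (ι → M)} (hs : s ∈ signAtoms Q ι) : IsDNF (signAtoms Q ι) sᶜ := by
  obtain ⟨f, hf, hs⟩ := hs
  have hneg : {x | 0 < -Q.mkQ (f x)} ∈ signAtoms Q ι :=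
    ⟨-f, neg_mem hf, Or.inr (Or.inr (Or.inr (by simp)))⟩
  rcases hs with rfl | rfl | rfl | rfl
  · rw [compl_setOf_eq_zero]
    exact (IsDNF.of_mem (B := signAtoms Q ι) ⟨f, hf, Or.inr (Or.inl rfl)⟩).union
      (IsDNF.of_mem ⟨-f, neg_mem hf, Or.inr (Or.inl rfl)⟩)
  · rw [compl_setOf_pos]
    exact (IsDNF.of_mem (B := signAtoms Q ι) ⟨f, hf, Or.inl rfl⟩).union
      (IsDNF.of_mem ⟨-f, neg_mem hf, Or.inr (Or.inl rfl)⟩)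
  · rw [compl_setOf_eq_zero (fun x => Q.mkQ (f x))]
    exact (IsDNF.of_mem (B := signAtoms Q ι) ⟨f, hf, Or.inr (Or.inr (Or.inr rfl))⟩).union
      (IsDNF.of_mem hneg)
  · rw [compl_setOf_pos (fun x => Q.mkQ (f x))]
    exact (IsDNF.of_mem (B := signAtoms Q ι) ⟨f, hf, Or.inr (Or.inr (Or.inl rfl))⟩).union
      (IsDNF.of_mem hneg)

theorem BoolComb.preimage_affine {κ : Type} [Fintype κ] {s : Set (ι → M)}
    (hs : BoolComb (signAtoms Q ι) s) {Φ : (κ → M) → ι → M}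
    (hΦ : ∀ i, (fun z => Φ z i) ∈ affineTerms F M κ) : BoolComb (signAtoms Q κ) (Φ ⁻¹' s) := by
  refine BoolComb.preimage (C := signAtoms Q κ) Φ (fun u hu => ?_) hs
  obtain ⟨f, hf, hu⟩ := hu
  refine .basic ⟨_, affineTerms.comp_mem hf hΦ, ?_⟩
  rcases hu with rfl | rfl | rfl | rfl
  exacts [Or.inl rfl, Or.inr (Or.inl rfl), Or.inr (Or.inr (Or.inl rfl)),
    Or.inr (Or.inr (Or.inr rfl))]

end Atoms

theorem Fin.mem_image_init_iff {α : Type*} {k : ℕ} {T : Set (Fin (k + 1) → α)} {v : Fin k → α} :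
    v ∈ Fin.init '' T ↔ ∃ y, Fin.snoc v y ∈ T := by
  constructor
  · rintro ⟨x, hx, rfl⟩
    exact ⟨x (Fin.last k), by rwa [Fin.snoc_init_self]⟩
  · rintro ⟨y, hy⟩
    exact ⟨_, hy, Fin.init_snoc _ _⟩

theorem exists_mkQ_eq_between {F M : Type*} [Ring F] [AddCommGroup M] [LinearOrder M]
    [IsOrderedAddMonoid M] [Module F M] [Nontrivial M] {Q : Submodule F M}
    (hQ : ∀ a b : M, a < b → ∃ q ∈ Q, a < q ∧ q < b)
    (lo hi : Finset M) (h : ∀ l ∈ lo, ∀ u ∈ hi, l < u) (w : M ⧸ Q) :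
    ∃ y, (∀ l ∈ lo, l < y) ∧ (∀ u ∈ hi, y < u) ∧ Q.mkQ y = w := by
  have : DenselyOrdered M := ⟨fun a b hab => let ⟨q, _, hq⟩ := hQ a b hab; ⟨q, hq⟩⟩
  obtain ⟨a, hlo, hhi⟩ := Order.exists_between_finsets lo hi h
  obtain ⟨b, hab, hbhi⟩ := Order.exists_between_finsets {a} hi (by simpa using hhi)
  obtain ⟨m, rfl⟩ := Q.mkQ_surjective w
  obtain ⟨q, hq, haq, hqb⟩ :=
    hQ (a - m) (b - m) (sub_lt_sub_right (hab a (Finset.mem_singleton_self a)) m)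
  refine ⟨m + q, fun l hl => (hlo l hl).trans ?_, fun u hu => lt_trans ?_ (hbhi u hu), ?_⟩
  · exact sub_lt_iff_lt_add'.1 haq
  · exact lt_sub_iff_add_lt'.1 hqb
  · simp [(Submodule.Quotient.mk_eq_zero Q).2 hq]

section Elimination

variable {F M : Type} [Field F] [AddCommGroup M] [LinearOrder M] [Module F M]
  {Q : Submodule F M} [LinearOrder (M ⧸ Q)] {k : ℕ}

theorem boolComb_setOf_exists_mkQ [LinearOrder F] [IsStrictOrderedRing F]
    [IsOrderedAddMonoid (M ⧸ Q)] [PosSMulStrictMono F (M ⧸ Q)] [Nontrivial (M ⧸ Q)] {ι : Type}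
    [Fintype ι] (lo hi eqs : List (affineTerms F M ι)) :
    BoolComb (signAtoms Q ι) {v | ∃ w : M ⧸ Q, (∀ r ∈ lo, Q.mkQ (r.1 v) < w) ∧
      (∀ p ∈ hi, w < Q.mkQ (p.1 v)) ∧ ∀ c ∈ eqs, w = Q.mkQ (c.1 v)} := by
  cases eqs with
  | nil =>
    have := denselyOrdered_of_posSMulStrictMono F (W := M ⧸ Q)
    have hset : {v | ∃ w : M ⧸ Q, (∀ r ∈ lo, Q.mkQ (r.1 v) < w) ∧
        (∀ p ∈ hi, w < Q.mkQ (p.1 v)) ∧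
          ∀ c ∈ ([] : List (affineTerms F M ι)), w = Q.mkQ (c.1 v)} =
        {v | ∀ r ∈ lo, ∀ p ∈ hi, Q.mkQ (r.1 v) < Q.mkQ (p.1 v)} := by
      ext v
      simp only [List.not_mem_nil, IsEmpty.forall_iff, implies_true, and_true, mem_ofPred_eq]
      refine ⟨fun ⟨w, hr, hp⟩ r hr' p hp' => (hr r hr').trans (hp p hp'), fun h => ?_⟩
      obtain ⟨w, hr, hp⟩ := Order.exists_between_finsets
        (lo.map fun r => Q.mkQ (r.1 v)).toFinset (hi.map fun p => Q.mkQ (p.1 v)).toFinset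
        (by simpa only [List.mem_toFinset, List.forall_mem_map] using h)
      simp only [List.mem_toFinset, List.forall_mem_map] at hr hp
      exact ⟨w, hr, hp⟩
    rw [hset]
    exact BoolComb.setOf_forall_mem _ fun r _ =>
      BoolComb.setOf_forall_mem _ fun p _ => boolComb_mkQ_lt r.2 p.2
  | cons c eqs =>
    have hset : {v | ∃ w : M ⧸ Q, (∀ r ∈ lo, Q.mkQ (r.1 v) < w) ∧
        (∀ p ∈ hi, w < Q.mkQ (p.1 v)) ∧ ∀ c' ∈ c :: eqs, w = Q.mkQ (c'.1 v)} =
        {v | ∀ r ∈ lo, Q.mkQ (r.1 v) < Q.mkQ (c.1 v)} ∩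
          {v | ∀ p ∈ hi, Q.mkQ (c.1 v) < Q.mkQ (p.1 v)} ∩
          {v | ∀ c' ∈ eqs, Q.mkQ (c.1 v) = Q.mkQ (c'.1 v)} := by
      ext v
      simp only [List.forall_mem_cons, mem_ofPred_eq, mem_inter_iff]
      constructor
      · rintro ⟨w, hr, hp, rfl, hc⟩
        exact ⟨⟨hr, hp⟩, hc⟩
      · rintro ⟨⟨hr, hp⟩, hc⟩
        exact ⟨_, hr, hp, rfl, hc⟩
    rw [hset]
    exact ((BoolComb.setOf_forall_mem _ fun r _ => boolComb_mkQ_lt r.2 c.2).inter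
      (BoolComb.setOf_forall_mem _ fun p _ => boolComb_mkQ_lt c.2 p.2)).inter
      (BoolComb.setOf_forall_mem _ fun c' _ => boolComb_mkQ_eq c.2 c'.2)

variable (Q) in
/-- Conditions on the last coordinate `y` that have been solved for `y`, with right-hand sides
affine in the remaining coordinates `v`. -/
def normalCell (A : Set (Fin k → M)) (lo hi vlo vhi veq : List (affineTerms F M (Fin k))) :
    Set (Fin (k + 1) → M) :=
  {x | Fin.init x ∈ A ∧ (∀ l ∈ lo, l.1 (Fin.init x) < x (Fin.last k)) ∧
    (∀ u ∈ hi, x (Fin.last k) < u.1 (Fin.init x)) ∧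
    (∀ r ∈ vlo, Q.mkQ (r.1 (Fin.init x)) < Q.mkQ (x (Fin.last k))) ∧
    (∀ p ∈ vhi, Q.mkQ (x (Fin.last k)) < Q.mkQ (p.1 (Fin.init x))) ∧
    ∀ c ∈ veq, Q.mkQ (x (Fin.last k)) = Q.mkQ (c.1 (Fin.init x))}

variable (Q) in
def IsNormalCell (C : Set (Fin (k + 1) → M)) : Prop :=
  ∃ (A : Set (Fin k → M)) (lo hi vlo vhi veq : List (affineTerms F M (Fin k))),
    BoolComb (signAtoms Q (Fin k)) A ∧ C = normalCell Q A lo hi vlo vhi veq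

theorem isNormalCell_univ : IsNormalCell Q (Set.univ : Set (Fin (k + 1) → M)) :=
  ⟨Set.univ, [], [], [], [], [], .univ, by ext; simp [normalCell]⟩

theorem IsNormalCell.inter {C C' : Set (Fin (k + 1) → M)} (hC : IsNormalCell Q C)
    (hC' : IsNormalCell Q C') : IsNormalCell Q (C ∩ C') := by
  obtain ⟨A, lo, hi, vlo, vhi, veq, hA, rfl⟩ := hC
  obtain ⟨A', lo', hi', vlo', vhi', veq', hA', rfl⟩ := hC'
  refine ⟨A ∩ A', lo ++ lo', hi ++ hi', vlo ++ vlo', vhi ++ vhi', veq ++ veq', hA.inter hA', ?_⟩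
  ext x
  simp only [normalCell, mem_inter_iff, mem_ofPred_eq, List.forall_mem_append]
  tauto

theorem image_init_normalCell [IsOrderedAddMonoid M] [Nontrivial M]
    (hQ : ∀ a b : M, a < b → ∃ q ∈ Q, a < q ∧ q < b)
    (A : Set (Fin k → M)) (lo hi vlo vhi veq : List (affineTerms F M (Fin k))) :
    Fin.init '' normalCell Q A lo hi vlo vhi veq =
      A ∩ {v | ∀ l ∈ lo, ∀ u ∈ hi, l.1 v < u.1 v} ∩
        {v | ∃ w : M ⧸ Q, (∀ r ∈ vlo, Q.mkQ (r.1 v) < w) ∧ (∀ p ∈ vhi, w < Q.mkQ (p.1 v)) ∧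
          ∀ c ∈ veq, w = Q.mkQ (c.1 v)} := by
  ext v
  simp only [Fin.mem_image_init_iff, normalCell, Fin.init_snoc, Fin.snoc_last, mem_inter_iff,
    mem_ofPred_eq]
  constructor
  · rintro ⟨y, hA, hlo, hhi, hvlo, hvhi, hveq⟩
    exact ⟨⟨hA, fun l hl u hu => (hlo l hl).trans (hhi u hu)⟩, _, hvlo, hvhi, hveq⟩
  · rintro ⟨⟨hA, hlohi⟩, w, hvlo, hvhi, hveq⟩
    obtain ⟨y, hlo, hhi, rfl⟩ := exists_mkQ_eq_between hQ (lo.map fun l => l.1 v).toFinset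
      (hi.map fun u => u.1 v).toFinset
      (by simpa only [List.mem_toFinset, List.forall_mem_map] using hlohi) w
    simp only [List.mem_toFinset, List.forall_mem_map] at hlo hhi
    exact ⟨y, hA, hlo, hhi, hvlo, hvhi, hveq⟩

theorem IsNormalCell.boolComb_image_init [LinearOrder F] [IsStrictOrderedRing F]
    [IsOrderedAddMonoid M] [IsOrderedAddMonoid (M ⧸ Q)] [PosSMulStrictMono F (M ⧸ Q)]
    [Nontrivial M] [Nontrivial (M ⧸ Q)] (hQ : ∀ a b : M, a < b → ∃ q ∈ Q, a < q ∧ q < b)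
    {C : Set (Fin (k + 1) → M)} (hC : IsNormalCell Q C) :
    BoolComb (signAtoms Q (Fin k)) (Fin.init '' C) := by
  obtain ⟨A, lo, hi, vlo, vhi, veq, hA, rfl⟩ := hC
  rw [image_init_normalCell hQ]
  exact (hA.inter (BoolComb.setOf_forall_mem _ fun l _ =>
    BoolComb.setOf_forall_mem _ fun u _ => boolComb_lt l.2 u.2)).inter
    (boolComb_setOf_exists_mkQ vlo vhi veq)

theorem isNormalCell_or_subset_graph_of_mem_signAtoms [LinearOrder F] [IsStrictOrderedRing F]
    [IsOrderedAddMonoid M] [IsOrderedAddMonoid (M ⧸ Q)] [PosSMulStrictMono F M]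
    [PosSMulStrictMono F (M ⧸ Q)] {s : Set (Fin (k + 1) → M)}
    (hs : s ∈ signAtoms Q (Fin (k + 1))) :
    IsNormalCell Q s ∨
      ∃ e ∈ affineTerms F M (Fin k), s ⊆ {x | x (Fin.last k) = e (Fin.init x)} := by
  obtain ⟨f, hf, hs⟩ := hs
  obtain ⟨a, g, hg, hfg⟩ := affineTerms.exists_eq_smul_last_add hf
  have hfg' (x : Fin (k + 1) → M) :
      Q.mkQ (f x) = a • Q.mkQ (x (Fin.last k)) + Q.mkQ (g (Fin.init x)) := by
    simp [hfg]
  by_cases ha : a = 0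
  · have hfree : ∀ A ∈ signAtoms Q (Fin k), IsNormalCell Q {x | Fin.init x ∈ A} := fun A hA =>
      ⟨A, [], [], [], [], [], .basic hA, by ext; simp [normalCell]⟩
    left
    subst ha
    rcases hs with rfl | rfl | rfl | rfl
    · simpa [hfg] using hfree _ ⟨g, hg, Or.inl rfl⟩
    · simpa [hfg] using hfree _ ⟨g, hg, Or.inr (Or.inl rfl)⟩
    · simpa [hfg'] using hfree _ ⟨g, hg, Or.inr (Or.inr (Or.inl rfl))⟩
    · simpa [hfg'] using hfree _ ⟨g, hg, Or.inr (Or.inr (Or.inr rfl))⟩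
  set e : affineTerms F M (Fin k) := -a⁻¹ • ⟨g, hg⟩
  have he (v : Fin k → M) : e.1 v = -a⁻¹ • g v := rfl
  rcases hs with rfl | rfl | rfl | rfl
  · exact .inr ⟨e, e.2, fun x hx => by simpa [hfg, smul_add_eq_zero_iff _ _ ha, he] using hx⟩
  · refine .inl ?_
    rcases lt_or_gt_of_ne ha with ha | ha
    · exact ⟨univ, [], [e], [], [], [], .univ, by
        ext x; simp [normalCell, hfg, pos_smul_add_iff_of_neg _ _ ha, he]⟩
    · exact ⟨univ, [e], [], [], [], [], .univ, by
        ext x; simp [normalCell, hfg, pos_smul_add_iff_of_pos _ _ ha, he]⟩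
  · exact .inl ⟨univ, [], [], [], [], [e], .univ, by
      ext x; simp [normalCell, hfg', smul_add_eq_zero_iff _ _ ha, he]⟩
  · refine .inl ?_
    rcases lt_or_gt_of_ne ha with ha | ha
    · exact ⟨univ, [], [], [], [e], [], .univ, by
        ext x; simp [normalCell, hfg', pos_smul_add_iff_of_neg _ _ ha, he]⟩
    · exact ⟨univ, [], [], [e], [], [], .univ, by
        ext x; simp [normalCell, hfg', pos_smul_add_iff_of_pos _ _ ha, he]⟩

theorem IsCell.isNormalCell_or_subset_graph [LinearOrder F] [IsStrictOrderedRing F]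
    [IsOrderedAddMonoid M] [IsOrderedAddMonoid (M ⧸ Q)] [PosSMulStrictMono F M]
    [PosSMulStrictMono F (M ⧸ Q)] {C : Set (Fin (k + 1) → M)}
    (hC : IsCell (signAtoms Q (Fin (k + 1))) C) :
    IsNormalCell Q C ∨
      ∃ e ∈ affineTerms F M (Fin k), C ⊆ {x | x (Fin.last k) = e (Fin.init x)} := by
  induction hC with
  | univ => exact .inl isNormalCell_univ
  | inter_of_mem hs _ ih =>
    rcases isNormalCell_or_subset_graph_of_mem_signAtoms hs with hN | ⟨e, he, hsub⟩
    · rcases ih with hN' | ⟨e, he, hsub⟩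
      · exact .inl (hN.inter hN')
      · exact .inr ⟨e, he, inter_subset_right.trans hsub⟩
    · exact .inr ⟨e, he, inter_subset_left.trans hsub⟩

theorem boolComb_image_init_of_subset_graph {C : Set (Fin (k + 1) → M)}
    (hC : BoolComb (signAtoms Q (Fin (k + 1))) C) {e : (Fin k → M) → M}
    (he : e ∈ affineTerms F M (Fin k)) (hCe : C ⊆ {x | x (Fin.last k) = e (Fin.init x)}) :
    BoolComb (signAtoms Q (Fin k)) (Fin.init '' C) := by
  have : Fin.init '' C = (fun v => Fin.snoc v (e v)) ⁻¹' C := by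
    ext v
    refine ⟨?_, fun hv => ⟨_, hv, Fin.init_snoc _ _⟩⟩
    rintro ⟨x, hx, rfl⟩
    rwa [mem_preimage, ← (hCe hx : x (Fin.last k) = _), Fin.snoc_init_self]
  rw [this]
  refine hC.preimage_affine fun i => Fin.lastCases ?_ (fun j => ?_) i
  · simpa using he
  · simpa using affineTerms.apply_mem j

theorem BoolComb.image_init [LinearOrder F] [IsStrictOrderedRing F] [IsOrderedAddMonoid M]
    [IsOrderedAddMonoid (M ⧸ Q)] [PosSMulStrictMono F M] [PosSMulStrictMono F (M ⧸ Q)]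
    [Nontrivial M] [Nontrivial (M ⧸ Q)] (hQ : ∀ a b : M, a < b → ∃ q ∈ Q, a < q ∧ q < b)
    {T : Set (Fin (k + 1) → M)}
    (hT : BoolComb (signAtoms Q (Fin (k + 1))) T) :
    BoolComb (signAtoms Q (Fin k)) (Fin.init '' T) := by
  have hD := hT.isDNF fun _ => isDNF_compl_of_mem_signAtoms
  clear hT
  induction hD with
  | empty => simpa using BoolComb.empty
  | union_of_isCell hC _ ih =>
    rw [image_union]
    refine BoolComb.union ?_ ih
    rcases hC.isNormalCell_or_subset_graph with hN | ⟨e, he, hsub⟩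
    · exact hN.boolComb_image_init hQ
    · exact boolComb_image_init_of_subset_graph hC.boolComb he hsub

end Elimination

section Formulas

variable {F M : Type} [Field F] [AddCommGroup M] [LinearOrder M] [Module F M] {Q : Submodule F M}
  {k : ℕ}

theorem realize_term_mem_affineTerms (one : M) (prec : (M ⧸ Q) → (M ⧸ Q) → Prop) {β : Type}
    (t : (LP' F).Term β) {env : (Fin k → M) → β → M}
    (henv : ∀ b, (fun x => env x b) ∈ affineTerms F M (Fin k)) :
    letI := LP'Struc F M one Q prec
    (fun x => t.realize (env x)) ∈ affineTerms F M (Fin k) := by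
  let := LP'Struc F M one Q prec
  induction t with
  | var b => exact henv b
  | func f ts ih =>
    cases f with
    | add => exact add_mem (ih 0) (ih 1)
    | neg => exact neg_mem (ih 0)
    | zero => exact zero_mem _
    | one => exact affineTerms.const_mem one
    | smul c => exact Submodule.smul_mem _ c (ih 0)

theorem boolComb_setOf_realize [LinearOrder F] [IsStrictOrderedRing F] [IsOrderedAddMonoid M]
    [LinearOrder (M ⧸ Q)] [IsOrderedAddMonoid (M ⧸ Q)] [PosSMulStrictMono F M]
    [PosSMulStrictMono F (M ⧸ Q)] [Nontrivial M] [Nontrivial (M ⧸ Q)]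
    (hQ : ∀ a b : M, a < b → ∃ q ∈ Q, a < q ∧ q < b) (one : M) {β : Type} {l : ℕ}
    (φ : (LP' F).BoundedFormula β l) {env : (Fin k → M) → β → M} {xs : (Fin k → M) → Fin l → M}
    (henv : ∀ b, (fun x => env x b) ∈ affineTerms F M (Fin k))
    (hxs : ∀ j, (fun x => xs x j) ∈ affineTerms F M (Fin k)) :
    letI := LP'Struc F M one Q (· < ·)
    BoolComb (signAtoms Q (Fin k)) {x | φ.Realize (env x) (xs x)} := by
  let := LP'Struc F M one Q (· < ·)
  have hterm {k l : ℕ} {env : (Fin k → M) → β → M} {xs : (Fin k → M) → Fin l → M}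
      (henv : ∀ b, (fun x => env x b) ∈ affineTerms F M (Fin k))
      (hxs : ∀ j, (fun x => xs x j) ∈ affineTerms F M (Fin k)) (t : (LP' F).Term (β ⊕ Fin l)) :
      (fun x => t.realize (Sum.elim (env x) (xs x))) ∈ affineTerms F M (Fin k) :=
    realize_term_mem_affineTerms one _ t (by rintro (b | j); exacts [henv b, hxs j])
  induction φ generalizing k with
  | falsum => exact BoolComb.empty
  | equal t₁ t₂ => exact boolComb_eq (hterm henv hxs t₁) (hterm henv hxs t₂)
  | rel R ts =>
    cases R with
    | lt => exact boolComb_lt (hterm henv hxs (ts 0)) (hterm henv hxs (ts 1))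
    | q =>
      have h := BoolComb.basic (B := signAtoms Q (Fin k))
        ⟨_, hterm henv hxs (ts 0), Or.inr (Or.inr (Or.inl rfl))⟩
      simp only [Submodule.mkQ_apply, Submodule.Quotient.mk_eq_zero] at h
      exact h
    | plt => exact boolComb_mkQ_lt (hterm henv hxs (ts 0)) (hterm henv hxs (ts 1))
  | imp φ ψ ihφ ihψ =>
    convert (ihφ henv hxs).compl.union (ihψ henv hxs) using 1
    ext x
    simp [imp_iff_not_or]
  | @all n φ ih =>
    have hxs' (j : Fin (n + 1)) :
        (fun x => Fin.snoc (α := fun _ => M) (xs (Fin.init x)) (x (Fin.last k)) j) ∈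
          affineTerms F M (Fin (k + 1)) := by
      refine Fin.lastCases ?_ (fun j => ?_) j
      · simpa using affineTerms.apply_mem (Fin.last k)
      · simpa using affineTerms.comp_init_mem (hxs j)
    have := (ih (fun b => affineTerms.comp_init_mem (henv b)) hxs').compl.image_init hQ
    convert this.compl using 1
    ext x
    simp only [mem_compl_iff, Fin.mem_image_init_iff, mem_ofPred_eq, Fin.init_snoc, Fin.snoc_last,
      not_exists, not_not, BoundedFormula.realize_all]

end Formulas

theorem exists_eq_of_mem_signAtoms {F M : Type} [Field F] [AddCommGroup M] [LinearOrder M]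
    [Module F M] {Q : Submodule F M} [LinearOrder (M ⧸ Q)] [IsOrderedAddMonoid (M ⧸ Q)] {n : ℕ}
    {s : Set (Fin n → M)} (hs : s ∈ signAtoms Q (Fin n)) :
    ∃ (c : Fin n → F) (b : M),
      s = {x | (∑ i, c i • x i) + b = 0} ∨ s = {x | 0 < (∑ i, c i • x i) + b} ∨
      s = {x | (∑ i, c i • x i) + b ∈ Q} ∨
      s = {x | (Submodule.Quotient.mk ((∑ i, c i • x i) + b) : M ⧸ Q) < 0} := by
  obtain ⟨f, ⟨c, b, hf⟩, hs⟩ := hs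
  obtain rfl : f = fun x => ∑ i, c i • x i + b := funext hf
  rcases hs with rfl | rfl | rfl | rfl
  · exact ⟨c, b, .inl rfl⟩
  · exact ⟨c, b, .inr (.inl rfl)⟩
  · refine ⟨c, b, .inr (.inr (.inl ?_))⟩
    ext x
    simp only [mem_ofPred_eq, Submodule.mkQ_apply, Submodule.Quotient.mk_eq_zero]
  · refine ⟨-c, -b, .inr (.inr (.inr ?_))⟩
    ext x
    simp only [mem_ofPred_eq, Pi.neg_apply, neg_smul, Finset.sum_neg_distrib, ← neg_add,
      Submodule.Quotient.mk_neg, neg_lt_zero, Submodule.mkQ_apply]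

theorem BoolComb.of_definable {F M : Type} [Field F] [LinearOrder F] [IsStrictOrderedRing F]
    [AddCommGroup M] [LinearOrder M] [IsOrderedAddMonoid M] [Module F M] {Q : Submodule F M}
    [LinearOrder (M ⧸ Q)] [IsOrderedAddMonoid (M ⧸ Q)] [PosSMulStrictMono F M]
    [PosSMulStrictMono F (M ⧸ Q)] [Nontrivial M] [Nontrivial (M ⧸ Q)]
    (hQ : ∀ a b : M, a < b → ∃ q ∈ Q, a < q ∧ q < b) (one : M) {n : ℕ} {S : Set (Fin n → M)}
    (hS : letI := LP'Struc F M one Q (· < ·); DefinableIn (LP' F) M S) :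
    BoolComb (signAtoms Q (Fin n)) S := by
  let := LP'Struc F M one Q (· < ·)
  obtain ⟨φ, rfl⟩ := Set.definable_iff_exists_formula_sum.1 hS
  exact boolComb_setOf_realize hQ one φ (xs := fun _ => default)
    (by rintro (a | i); exacts [affineTerms.const_mem _, affineTerms.apply_mem i])
    fun j => j.elim0

theorem statement4
    (hsmul : ∀ (c : F) (x : M), 0 < c → 0 < x → 0 < c • x)
    (one : M)
    (Q : Submodule F M) (hQproper : (Q : Set M) ≠ Set.univ)
    (hQdense : ∀ a b : M, a < b → ∃ q ∈ Q, a < q ∧ q < b)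
    (prec : (M ⧸ Q) → (M ⧸ Q) → Prop)
    (hirrefl : ∀ u, ¬ prec u u)
    (htrans : ∀ u v w, prec u v → prec v w → prec u w)
    (htotal : ∀ u v, prec u v ∨ u = v ∨ prec v u)
    (htransl : ∀ u v w, prec u v → prec (u + w) (v + w))
    (hscalar : ∀ (c : F) (v : M ⧸ Q), 0 < c → prec 0 v → prec 0 (c • v))
    (n : ℕ) (S : Set (Fin n → M))
    (hS : letI := LP'Struc F M one Q prec; DefinableIn (LP' F) M S) :
    BoolComb {T : Set (Fin n → M) | ∃ (c : Fin n → F) (b : M),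
        T = {x | (∑ i, c i • x i) + b = 0} ∨
        T = {x | 0 < (∑ i, c i • x i) + b} ∨
        T = {x | (∑ i, c i • x i) + b ∈ Q} ∨
        T = {x | prec (Submodule.Quotient.mk ((∑ i, c i • x i) + b)) 0}} S := by
  have : IsStrictTotalOrder (M ⧸ Q) prec :=
    { trichotomous := fun u v h₁ h₂ => ((htotal u v).resolve_left h₁).resolve_right h₂
      irrefl := hirrefl
      trans := htrans }
  -- The `<` of this order is `prec` by definition, so `hS` and the target need no rewriting.
  let : LinearOrder (M ⧸ Q) := by classical exact linearOrderOfSTO prec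
  have : IsOrderedAddMonoid (M ⧸ Q) :=
    { add_le_add_left := fun u v huv w => huv.imp (congrArg (· + w)) (htransl u v w) }
  have : PosSMulStrictMono F M := posSMulStrictMono_of_smul_pos hsmul
  have : PosSMulStrictMono F (M ⧸ Q) := posSMulStrictMono_of_smul_pos hscalar
  have : Nontrivial (M ⧸ Q) := Submodule.Quotient.nontrivial_iff.2 fun h => hQproper (by simp [h])
  have : Nontrivial M := Q.mkQ_surjective.nontrivial
  exact (BoolComb.of_definable hQdense one hS).mono fun s hs =>
    .basic (exists_eq_of_mem_signAtoms hs)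
end
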